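/- arXiv:2108.04871 — 4 statements merged into one kernel-verified Lean document; each statement's English description precedes it below -/
import Mathlib

section
/- Let q be a prime power, v ≥ 3, and 1 ≤ t ≤ q − 1. Let K0 be a (t mod q)-arc defined on the points of a hyperplane H of PG(v−1,q) (where the lines of H are the lines of PG(v−1,q) contained in H), and let P be a point not lying in H. Define the arc K on PG(v−1,q) by K(P) = t and, for every point Q ≠ P, K(Q) = K0(R), where R is the unique point of H on the line through P and Q. Then K is a (t mod q)-arc in PG(v−1,q) of cardinality q·#K0 + t, and if K0 is strong then K is strong. -/
/-!
Every point `Q ≠ P0` lies on exactly one line through `P0`, and that line meets `H` in exactly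
one point `R`. Double counting the pairs `(Q, R)` gives, for every subspace `S`,
`∑_{Q ∈ S, Q ≠ P0} K Q = ∑_{R ∈ H} K0 R · #{Q ∈ S ∩ P0R, Q ≠ P0}`.
If `P0 ∈ S` the count is `q` for `R ∈ S` and `0` otherwise, so `K(S) = t + q · K0(S ∩ H)`;
taking `S` the whole space gives `#K`, taking `S` a line through `P0` gives `K(S) ≡ t`.
If `P0 ∉ S` the count is `1` for `R ∈ ⟨P0, S⟩` and `0` otherwise, so `K(S) = K0(⟨P0, S⟩ ∩ H)`,
and for a line `S` the subspace `⟨P0, S⟩ ∩ H` is a line of `H`.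
-/

open Module

/-- The set of subspaces of the vector space `F^v` of (algebraic) dimension `k`;
for `k = 1` these are the points of `PG(v-1, q)`, for `k = 2` the lines, and
for `k = v - 1` the hyperplanes. -/
abbrev PSub (F : Type*) [Field F] (v k : ℕ) :=
  {S : Submodule F (Fin v → F) // Module.finrank F S = k}

/-- The multiplicity `K(S)` of a subspace `S` with respect to the arc `K`. -/
noncomputable def pmult {F : Type*} [Field F] {v : ℕ}
    (K : PSub F v 1 → ℕ) (S : Submodule F (Fin v → F)) : ℕ :=
  ∑ᶠ (P : PSub F v 1) (_ : P.1 ≤ S), K P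

/-- The cardinality `#K` of the arc `K`. -/
noncomputable def pcard {F : Type*} [Field F] {v : ℕ} (K : PSub F v 1 → ℕ) : ℕ :=
  ∑ᶠ P : PSub F v 1, K P

open Finset

namespace PSub

variable {F : Type*} [Field F] {v : ℕ}

instance [Finite F] {k : ℕ} : Finite (PSub F v k) :=
  have : Finite (Submodule F (Fin v → F)) :=
    Finite.of_injective _ (SetLike.coe_injective (A := Submodule F (Fin v → F)))
  Subtype.finite

noncomputable instance [Finite F] {k : ℕ} : Fintype (PSub F v k) := Fintype.ofFinite _

theorem eq_of_le {k : ℕ} {P Q : PSub F v k} (h : P.1 ≤ Q.1) : P = Q :=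
  Subtype.ext (Submodule.eq_of_le_of_finrank_eq h (P.2.trans Q.2.symm))

theorem finrank_sup_of_not_le {P : PSub F v 1} {S : Submodule F (Fin v → F)} (h : ¬ P.1 ≤ S) :
    finrank F ↥(P.1 ⊔ S) = finrank F S + 1 := by
  have hinf : finrank F ↥(P.1 ⊓ S) < finrank F P.1 :=
    Submodule.finrank_lt_finrank_of_lt (inf_le_left.lt_of_ne fun he => h (he ▸ inf_le_right))
  have := Submodule.finrank_sup_add_finrank_inf_eq P.1 S
  rw [P.2] at this hinf
  omega

theorem finrank_inf_add_one_of_not_le {H : PSub F v (v - 1)} {S : Submodule F (Fin v → F)}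
    (h : ¬ S ≤ H.1) : finrank F ↥(S ⊓ H.1) + 1 = finrank F S := by
  have hlt : finrank F H.1 < finrank F ↥(S ⊔ H.1) :=
    Submodule.finrank_lt_finrank_of_lt (le_sup_right.lt_of_ne fun he => h (he ▸ le_sup_left))
  have hle := Submodule.finrank_le (S ⊔ H.1)
  rw [Module.finrank_fin_fun] at hle
  rw [H.2] at hlt
  have htop : S ⊔ H.1 = ⊤ :=
    Submodule.eq_top_of_finrank_eq (by rw [Module.finrank_fin_fun]; omega)
  have := Submodule.finrank_sup_add_finrank_inf_eq S H.1
  rw [htop, finrank_top, Module.finrank_fin_fun, H.2] at this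
  omega

theorem not_le_of_ne {k : ℕ} {P Q : PSub F v k} (h : Q ≠ P) : ¬ P.1 ≤ Q.1 :=
  fun hle => h (eq_of_le hle).symm

theorem finrank_sup_of_ne {P Q : PSub F v 1} (h : Q ≠ P) : finrank F ↥(P.1 ⊔ Q.1) = 2 := by
  rw [finrank_sup_of_not_le (not_le_of_ne h), Q.2]

theorem sup_eq_of_le_sup {P Q R : PSub F v 1} (hQ : Q ≠ P) (hR : R ≠ P)
    (h : R.1 ≤ P.1 ⊔ Q.1) : P.1 ⊔ R.1 = P.1 ⊔ Q.1 :=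
  Submodule.eq_of_le_of_finrank_eq (sup_le le_sup_left h)
    ((finrank_sup_of_ne hR).trans (finrank_sup_of_ne hQ).symm)

theorem le_sup_iff_le_sup {P Q R : PSub F v 1} (hQ : Q ≠ P) (hR : R ≠ P) :
    R.1 ≤ P.1 ⊔ Q.1 ↔ Q.1 ≤ P.1 ⊔ R.1 :=
  ⟨fun h => sup_eq_of_le_sup hQ hR h ▸ le_sup_right,
    fun h => sup_eq_of_le_sup hR hQ h ▸ le_sup_right⟩

theorem finrank_sup_inf_of_not_le {H : PSub F v (v - 1)} {P : PSub F v 1}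
    {S : Submodule F (Fin v → F)} (hP : ¬ P.1 ≤ H.1) (hS : ¬ P.1 ≤ S) :
    finrank F ↥((P.1 ⊔ S) ⊓ H.1) = finrank F S := by
  have := finrank_inf_add_one_of_not_le (H := H) (S := P.1 ⊔ S)
    fun hle => hP (le_sup_left.trans hle)
  rw [finrank_sup_of_not_le hS] at this
  omega

theorem finrank_inf_sup_of_le_sup {P R : PSub F v 1} {S : Submodule F (Fin v → F)}
    (hP : ¬ P.1 ≤ S) (hR : R.1 ≤ P.1 ⊔ S) (hRP : R ≠ P) :
    finrank F ↥(S ⊓ (P.1 ⊔ R.1)) = 1 := by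
  have hsup : S ⊔ (P.1 ⊔ R.1) = P.1 ⊔ S :=
    le_antisymm (sup_le le_sup_right (sup_le le_sup_left hR))
      (sup_le (le_sup_left.trans le_sup_right) le_sup_left)
  have := Submodule.finrank_sup_add_finrank_inf_eq S (P.1 ⊔ R.1)
  rw [hsup, finrank_sup_of_not_le hP, finrank_sup_of_ne hRP] at this
  omega

end PSub

section Counting

open scoped Classical

variable {F : Type*} [Field F] [Finite F] {v : ℕ}

noncomputable def pointsIn (S : Submodule F (Fin v → F)) : Finset (PSub F v 1) :=
  univ.filter fun P => P.1 ≤ S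

@[simp]
theorem mem_pointsIn {S : Submodule F (Fin v → F)} {P : PSub F v 1} :
    P ∈ pointsIn S ↔ P.1 ≤ S := by
  simp [pointsIn]

theorem pmult_eq_sum (K : PSub F v 1 → ℕ) (S : Submodule F (Fin v → F)) :
    pmult K S = ∑ P ∈ pointsIn S, K P := by
  rw [pmult, pointsIn, Finset.sum_filter, ← finsum_eq_sum_of_fintype]
  exact finsum_congr fun P => finsum_eq_if

theorem pcard_eq_pmult_top (K : PSub F v 1 → ℕ) : pcard K = pmult K ⊤ := by
  simp [pcard, pmult_eq_sum, pointsIn, finsum_eq_sum_of_fintype]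

theorem pointsIn_point (P : PSub F v 1) : pointsIn P.1 = {P} := by
  ext Q
  simp only [mem_pointsIn, mem_singleton]
  exact ⟨PSub.eq_of_le, fun h => h ▸ le_rfl⟩

theorem card_pointsIn_of_finrank_eq_two {W : Submodule F (Fin v → F)} (hW : finrank F W = 2) :
    #(pointsIn W) = Nat.card F + 1 := by
  -- the points of `PG(v-1,q)` lying in `W` are the points of the projective line `ℙ F W`
  let e₁ : {P : PSub F v 1 // P.1 ≤ W} ≃ {U : {U // U ≤ W} // finrank F U.1 = 1} :=
    (Equiv.subtypeSubtypeEquivSubtypeInter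
        (fun U : Submodule F (Fin v → F) => finrank F U = 1) (· ≤ W)).trans <|
      (Equiv.subtypeEquivRight fun _ => and_comm).trans
        (Equiv.subtypeSubtypeEquivSubtypeInter (· ≤ W) fun U => finrank F U = 1).symm
  let e₂ : {U : {U // U ≤ W} // finrank F U.1 = 1} ≃ {U : Submodule F W // finrank F U = 1} :=
    Equiv.subtypeEquiv (Submodule.MapSubtype.orderIso W).symm.toEquiv fun U => by
      rw [← Submodule.finrank_map_subtype_eq W]
      exact Iff.of_eq <| congrArg (finrank F ·.1 = 1)
        ((Submodule.MapSubtype.orderIso W).apply_symm_apply U).symm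
  rw [← Projectivization.card_of_finrank_two F W hW,
    ← Nat.card_congr ((e₁.trans e₂).trans (Projectivization.equivSubmodule F W).symm),
    Nat.card_eq_fintype_card, Fintype.card_subtype, pointsIn]

end Counting

def IsLift {F : Type*} [Field F] {v : ℕ} (H : PSub F v (v - 1)) (P0 : PSub F v 1)
    (K0 K : PSub F v 1 → ℕ) : Prop :=
  ∀ Q : PSub F v 1, Q ≠ P0 → ∀ R : PSub F v 1, R.1 ≤ H.1 → R.1 ≤ P0.1 ⊔ Q.1 → K Q = K0 R

section Lifting

open scoped Classical

variable {F : Type*} [Field F] [Finite F] {v : ℕ}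

theorem sum_pointsIn_mul_ite (K0 : PSub F v 1 → ℕ) (H S : Submodule F (Fin v → F)) (c : ℕ) :
    ∑ R ∈ pointsIn H, K0 R * (if R.1 ≤ S then c else 0) = c * pmult K0 (S ⊓ H) := by
  simp only [mul_ite, mul_zero]
  rw [← sum_filter, pmult_eq_sum, mul_sum]
  refine sum_congr ?_ fun R _ => mul_comm _ _
  ext R
  simp [le_inf_iff, and_comm]

theorem card_filter_le_sup_eq_zero {P R : PSub F v 1} {S : Submodule F (Fin v → F)}
    (hR : R ≠ P) (h : ¬ R.1 ≤ P.1 ⊔ S) : #{Q ∈ (pointsIn S).erase P | Q.1 ≤ P.1 ⊔ R.1} = 0 := by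
  refine card_eq_zero.2 (filter_eq_empty_iff.2 fun Q hQ hQR => h ?_)
  obtain ⟨hQP, hQS⟩ := mem_erase.1 hQ
  exact ((PSub.le_sup_iff_le_sup hQP hR).2 hQR).trans (sup_le_sup_left (mem_pointsIn.1 hQS) _)

variable {H : PSub F v (v - 1)} {P0 : PSub F v 1} {K0 K : PSub F v 1 → ℕ}

theorem IsLift.eq_pmult (hK : IsLift H P0 K0 K) (hP0 : ¬ P0.1 ≤ H.1) {Q : PSub F v 1}
    (hQ : Q ≠ P0) : K Q = pmult K0 ((P0.1 ⊔ Q.1) ⊓ H.1) := by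
  let R : PSub F v 1 :=
    ⟨_, (PSub.finrank_sup_inf_of_not_le hP0 (PSub.not_le_of_ne hQ)).trans Q.2⟩
  rw [show (P0.1 ⊔ Q.1) ⊓ H.1 = R.1 from rfl, pmult_eq_sum, pointsIn_point, sum_singleton]
  exact hK Q hQ R inf_le_right inf_le_left

theorem IsLift.sum_erase_eq_sum_mul_card (hK : IsLift H P0 K0 K) (hP0 : ¬ P0.1 ≤ H.1)
    (S : Submodule F (Fin v → F)) :
    ∑ Q ∈ (pointsIn S).erase P0, K Q =
      ∑ R ∈ pointsIn H.1, K0 R * #{Q ∈ (pointsIn S).erase P0 | Q.1 ≤ P0.1 ⊔ R.1} := by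
  have hne : ∀ R : PSub F v 1, R.1 ≤ H.1 → R ≠ P0 := fun R hR h => hP0 (h ▸ hR)
  calc ∑ Q ∈ (pointsIn S).erase P0, K Q
      = ∑ Q ∈ (pointsIn S).erase P0, ∑ R ∈ pointsIn H.1 with R.1 ≤ P0.1 ⊔ Q.1, K0 R := by
        refine sum_congr rfl fun Q hQ => ?_
        rw [hK.eq_pmult hP0 (ne_of_mem_erase hQ), pmult_eq_sum]
        congr 1
        ext R
        simp [le_inf_iff, and_comm]
    _ = ∑ R ∈ pointsIn H.1, ∑ Q ∈ (pointsIn S).erase P0 with Q.1 ≤ P0.1 ⊔ R.1, K0 R := by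
        refine sum_comm' fun Q R => ?_
        simp only [mem_filter, mem_pointsIn]
        constructor
        · rintro ⟨hQ, hRH, hRQ⟩
          exact ⟨⟨hQ, (PSub.le_sup_iff_le_sup (ne_of_mem_erase hQ) (hne R hRH)).1 hRQ⟩, hRH⟩
        · rintro ⟨⟨hQ, hQR⟩, hRH⟩
          exact ⟨hQ, hRH, (PSub.le_sup_iff_le_sup (ne_of_mem_erase hQ) (hne R hRH)).2 hQR⟩
    _ = _ := by simp only [sum_const, smul_eq_mul, mul_comm]

theorem IsLift.pmult_of_le (hK : IsLift H P0 K0 K) (hP0 : ¬ P0.1 ≤ H.1)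
    {S : Submodule F (Fin v → F)} (hS : P0.1 ≤ S) :
    pmult K S = K P0 + Nat.card F * pmult K0 (S ⊓ H.1) := by
  have hP0S : P0 ∈ pointsIn S := mem_pointsIn.2 hS
  rw [pmult_eq_sum, ← add_sum_erase _ _ hP0S, hK.sum_erase_eq_sum_mul_card hP0,
    ← sum_pointsIn_mul_ite]
  refine congrArg _ (sum_congr rfl fun R hR => congrArg _ ?_)
  have hRP0 : R ≠ P0 := fun h => hP0 (h ▸ mem_pointsIn.1 hR)
  split_ifs with hRS
  · have hline : {Q ∈ (pointsIn S).erase P0 | Q.1 ≤ P0.1 ⊔ R.1} =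
        (pointsIn (P0.1 ⊔ R.1)).erase P0 := by
      ext Q
      simp only [mem_filter, mem_erase, mem_pointsIn]
      exact ⟨fun h => ⟨h.1.1, h.2⟩, fun h => ⟨⟨h.1, h.2.trans (sup_le hS hRS)⟩, h.2⟩⟩
    rw [hline, card_erase_of_mem (mem_pointsIn.2 le_sup_left),
      card_pointsIn_of_finrank_eq_two (PSub.finrank_sup_of_ne hRP0), Nat.add_sub_cancel]
  · exact card_filter_le_sup_eq_zero hRP0 (by rwa [sup_eq_right.2 hS])

theorem IsLift.pmult_of_not_le (hK : IsLift H P0 K0 K) (hP0 : ¬ P0.1 ≤ H.1)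
    {S : Submodule F (Fin v → F)} (hS : ¬ P0.1 ≤ S) :
    pmult K S = pmult K0 ((P0.1 ⊔ S) ⊓ H.1) := by
  have hP0S : P0 ∉ pointsIn S := fun h => hS (mem_pointsIn.1 h)
  rw [pmult_eq_sum, ← erase_eq_of_notMem hP0S, hK.sum_erase_eq_sum_mul_card hP0,
    ← one_mul (pmult _ _), ← sum_pointsIn_mul_ite]
  refine sum_congr rfl fun R hR => congrArg _ ?_
  have hRP0 : R ≠ P0 := fun h => hP0 (h ▸ mem_pointsIn.1 hR)
  split_ifs with hRS
  · have hpt : {Q ∈ (pointsIn S).erase P0 | Q.1 ≤ P0.1 ⊔ R.1} =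
        pointsIn (⟨_, PSub.finrank_inf_sup_of_le_sup hS hRS hRP0⟩ : PSub F v 1).1 := by
      ext Q
      simp only [mem_filter, mem_erase, mem_pointsIn, le_inf_iff]
      exact ⟨fun h => ⟨h.1.2, h.2⟩, fun h => ⟨⟨fun hQ => hS (hQ ▸ h.1), h.1⟩, h.2⟩⟩
    rw [hpt, pointsIn_point, card_singleton]
  · exact card_filter_le_sup_eq_zero hRP0 hRS

end Lifting

theorem stmt1_general {F : Type*} [Field F] [Fintype F] (q : ℕ) (hq : Fintype.card F = q)
    {v : ℕ} (t : ℕ)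
    (H : PSub F v (v - 1)) (K0 : PSub F v 1 → ℕ)
    (hK0 : ∀ L : PSub F v 2, L.1 ≤ H.1 → pmult K0 L.1 ≡ t [MOD q])
    (P0 : PSub F v 1) (hP0 : ¬ P0.1 ≤ H.1)
    (K : PSub F v 1 → ℕ)
    (hKP0 : K P0 = t)
    (hKlift : ∀ Q : PSub F v 1, Q ≠ P0 →
      ∀ R : PSub F v 1, R.1 ≤ H.1 → R.1 ≤ P0.1 ⊔ Q.1 → K Q = K0 R) :
    (∀ L : PSub F v 2, pmult K L.1 ≡ t [MOD q]) ∧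
    pcard K = q * pmult K0 H.1 + t ∧
    ((∀ R : PSub F v 1, R.1 ≤ H.1 → K0 R ≤ t) → ∀ P : PSub F v 1, K P ≤ t) := by
  have hK : IsLift H P0 K0 K := hKlift
  rw [← Nat.card_eq_fintype_card] at hq
  subst hq
  refine ⟨fun L => ?_, ?_, fun hK0t P => ?_⟩
  · by_cases hL : P0.1 ≤ L.1
    · rw [hK.pmult_of_le hP0 hL, hKP0]
      exact Nat.add_mul_mod_self_left _ _ _
    · rw [hK.pmult_of_not_le hP0 hL]
      exact hK0 ⟨_, (PSub.finrank_sup_inf_of_not_le hP0 hL).trans L.2⟩ inf_le_right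
  · rw [pcard_eq_pmult_top, hK.pmult_of_le hP0 le_top, top_inf_eq, hKP0, add_comm]
  · by_cases hP : P = P0
    · exact hP ▸ hKP0.le
    · let R : PSub F v 1 :=
        ⟨_, (PSub.finrank_sup_inf_of_not_le hP0 (PSub.not_le_of_ne hP)).trans P.2⟩
      exact hKlift P hP R inf_le_right inf_le_left ▸ hK0t R inf_le_right

/-- The lifting construction: if `K0` is a `(t mod q)`-arc on a hyperplane `H`
of `PG(v-1,q)`, `P0` is a point outside `H`, and `K` is defined by `K P0 = t`
and `K Q = K0 R` for `Q ≠ P0`, where `R` is the unique point of `H` on the line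
through `P0` and `Q`, then `K` is a `(t mod q)`-arc of cardinality
`q * #K0 + t`, and it is strong whenever `K0` is strong. -/
theorem stmt1 {F : Type*} [Field F] [Fintype F] (q : ℕ) (hq : Fintype.card F = q)
    {v : ℕ} (hv : 3 ≤ v) (t : ℕ) (ht1 : 1 ≤ t) (ht2 : t ≤ q - 1)
    (H : PSub F v (v - 1)) (K0 : PSub F v 1 → ℕ)
    (hK0 : ∀ L : PSub F v 2, L.1 ≤ H.1 → pmult K0 L.1 ≡ t [MOD q])
    (P0 : PSub F v 1) (hP0 : ¬ P0.1 ≤ H.1)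
    (K : PSub F v 1 → ℕ)
    (hKP0 : K P0 = t)
    (hKlift : ∀ Q : PSub F v 1, Q ≠ P0 →
      ∀ R : PSub F v 1, R.1 ≤ H.1 → R.1 ≤ P0.1 ⊔ Q.1 → K Q = K0 R) :
    (∀ L : PSub F v 2, pmult K L.1 ≡ t [MOD q]) ∧
    pcard K = q * pmult K0 H.1 + t ∧
    ((∀ R : PSub F v 1, R.1 ≤ H.1 → K0 R ≤ t) → ∀ P : PSub F v 1, K P ≤ t) :=
  stmt1_general q hq t H K0 hK0 P0 hP0 K hKP0 hKlift
end

section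
/- Let q be a prime power, v ≥ 3, 1 ≤ t ≤ q − 1, and let K be a lifted (t mod q)-arc in PG(v−1,q). If P and Q are two distinct lifting points of K, then every point of the line through P and Q is a lifting point of K. -/
open Module

/-- `P0` is a lifting point of the arc `K`: there are a hyperplane `H` not
containing `P0` and a `(t mod q)`-arc `K0` on `H` such that `K` is the lift of
`K0` from `P0`, i.e. `K P0 = t` and for every point `Q ≠ P0`, `K Q = K0 R`
where `R` is the unique point of `H` on the line through `P0` and `Q`. -/
def IsLiftingPoint {F : Type*} [Field F] {v : ℕ} (q t : ℕ)
    (K : PSub F v 1 → ℕ) (P0 : PSub F v 1) : Prop :=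
  ∃ H : PSub F v (v - 1), ∃ K0 : PSub F v 1 → ℕ,
    ¬ P0.1 ≤ H.1 ∧
    (∀ L : PSub F v 2, L.1 ≤ H.1 → pmult K0 L.1 ≡ t [MOD q]) ∧
    K P0 = t ∧
    ∀ Q : PSub F v 1, Q ≠ P0 →
      ∀ R : PSub F v 1, R.1 ≤ H.1 → R.1 ≤ P0.1 ⊔ Q.1 → K Q = K0 R

/-!
Call `P` *radial* for `K` if `K` is constant on every line through `P` with `P` removed.
A lifting point is radial, since each line through it meets the hyperplane of the lift, and has
multiplicity `t`; conversely, since `K` is itself a `(t mod q)`-arc, a radial point of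
multiplicity `t` is a lifting point, with `K` in the role of the arc on any hyperplane avoiding
it. Points of the line `PQ` have multiplicity `t`, as `PQ`
is a line through the radial point `Q`. If `R` lies on `PQ` and `X`, `Y` are collinear with `R`
off `PQ`, the lines `PX` and `QY` are coplanar and meet in a point `Z ≠ P, Q`, so radiality at
`P` and at `Q` gives `K X = K Z = K Y`.
-/

section Points

variable {F : Type*} [Field F] {v : ℕ}

lemma finrank_sup_eq_two {A B : PSub F v 1} (h : A ≠ B) : finrank F ↥(A.1 ⊔ B.1) = 2 := by
  have hlt : A.1 ⊓ B.1 < A.1 :=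
    inf_le_left.lt_of_ne fun he => h <| Subtype.ext <|
      Submodule.eq_of_le_of_finrank_le (inf_eq_left.mp he) (by rw [A.2, B.2])
  have hinf : finrank F ↥(A.1 ⊓ B.1) = 0 := by
    have := Submodule.finrank_lt_finrank_of_lt hlt
    rw [A.2] at this
    omega
  have := Submodule.finrank_sup_add_finrank_inf_eq A.1 B.1
  rw [A.2, B.2, hinf] at this
  omega

lemma sup_eq_of_le {L : Submodule F (Fin v → F)} (hL : finrank F L = 2)
    {A B : PSub F v 1} (hA : A.1 ≤ L) (hB : B.1 ≤ L) (hAB : A ≠ B) : A.1 ⊔ B.1 = L :=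
  Submodule.eq_of_le_of_finrank_le (sup_le hA hB) (by rw [finrank_sup_eq_two hAB, hL])

lemma sup_eq_sup_of_le_sup {A X Y : PSub F v 1} (hY : Y.1 ≤ A.1 ⊔ X.1) (hYA : Y ≠ A)
    (hXA : X ≠ A) : A.1 ⊔ Y.1 = A.1 ⊔ X.1 :=
  sup_eq_of_le (finrank_sup_eq_two hXA.symm) le_sup_left hY hYA.symm

lemma exists_point_le_inf {S T : Submodule F (Fin v → F)}
    (h : finrank F ↥(S ⊔ T) < finrank F S + finrank F T) : ∃ R : PSub F v 1, R.1 ≤ S ⊓ T := by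
  have hpos : 0 < finrank F ↥(S ⊓ T) := by
    have := Submodule.finrank_sup_add_finrank_inf_eq S T
    omega
  obtain ⟨x, hx, hx0⟩ := Submodule.exists_mem_ne_zero_of_ne_bot
    (Submodule.one_le_finrank_iff.mp hpos)
  exact ⟨⟨Submodule.span F {x}, finrank_span_singleton hx0⟩,
    (Submodule.span_singleton_le_iff_mem x _).mpr hx⟩

lemma exists_hyperplane_not_ge (R : PSub F v 1) : ∃ H : PSub F v (v - 1), ¬ R.1 ≤ H.1 := by
  obtain ⟨r, hrR, hr0⟩ := Submodule.exists_mem_ne_zero_of_ne_bot (p := R.1) fun h => by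
    have := R.2
    rw [h, finrank_bot] at this
    omega
  obtain ⟨i, hi⟩ : ∃ i, r i ≠ 0 := Function.ne_iff.mp hr0
  let f : (Fin v → F) →ₗ[F] F := LinearMap.proj i
  have hf : LinearMap.range f = ⊤ :=
    LinearMap.range_eq_top.mpr fun c => ⟨fun _ => c, rfl⟩
  have hker : finrank F ↥(LinearMap.ker f) = v - 1 := by
    have := LinearMap.finrank_range_add_finrank_ker f
    rw [finrank_fin_fun, hf, finrank_top, finrank_self] at this
    omega
  exact ⟨⟨LinearMap.ker f, hker⟩, fun h => hi (h hrR)⟩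

end Points

section Lifting

variable {F : Type*} [Field F] {v : ℕ}

def IsRadialPoint (K : PSub F v 1 → ℕ) (P : PSub F v 1) : Prop :=
  ∀ X Y : PSub F v 1, X ≠ P → Y ≠ P → Y.1 ≤ P.1 ⊔ X.1 → K X = K Y

variable {q t : ℕ} {K : PSub F v 1 → ℕ} {P : PSub F v 1}

lemma IsLiftingPoint.apply_self (hP : IsLiftingPoint q t K P) : K P = t :=
  hP.choose_spec.choose_spec.2.2.1

lemma IsLiftingPoint.isRadialPoint (hP : IsLiftingPoint q t K P) : IsRadialPoint K P := by
  intro X Y hX hY hYX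
  obtain ⟨H, K0, -, -, -, hlift⟩ := hP
  have hL := finrank_sup_eq_two hX.symm
  obtain ⟨R, hR⟩ : ∃ R : PSub F v 1, R.1 ≤ (P.1 ⊔ X.1) ⊓ H.1 := by
    apply exists_point_le_inf
    have := Submodule.finrank_le ((P.1 ⊔ X.1) ⊔ H.1)
    rw [finrank_fin_fun] at this
    rw [hL, H.2]
    omega
  have hRL : R.1 ≤ P.1 ⊔ X.1 := hR.trans inf_le_left
  have hRH : R.1 ≤ H.1 := hR.trans inf_le_right
  rw [hlift X hX R hRH hRL, hlift Y hY R hRH (sup_eq_sup_of_le_sup hYX hY hX ▸ hRL)]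

lemma isLiftingPoint_of_isRadialPoint (hK : ∀ L : PSub F v 2, pmult K L.1 ≡ t [MOD q])
    (hPt : K P = t) (hP : IsRadialPoint K P) : IsLiftingPoint q t K P := by
  obtain ⟨H, hPH⟩ := exists_hyperplane_not_ge P
  refine ⟨H, K, hPH, fun L _ => hK L, hPt, fun X hX R hRH hRX => hP X R hX ?_ hRX⟩
  rintro rfl
  exact hPH hRH

end Lifting

section TwoRadialPoints

variable {F : Type*} [Field F] {v : ℕ} {K : PSub F v 1 → ℕ} {P Q R X Y : PSub F v 1}

lemma IsRadialPoint.apply_eq_of_le_sup (hQ : IsRadialPoint K Q) (hPQ : P ≠ Q)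
    (hKPQ : K P = K Q) (hR : R.1 ≤ P.1 ⊔ Q.1) : K R = K P := by
  by_cases hRQ : R = Q
  · rw [hRQ, hKPQ]
  · exact hQ P R hPQ hRQ (sup_comm Q.1 P.1 ▸ hR) |>.symm

lemma IsRadialPoint.apply_eq_of_not_le_sup (hP : IsRadialPoint K P) (hQ : IsRadialPoint K Q)
    (hPQ : P ≠ Q) (hR : R.1 ≤ P.1 ⊔ Q.1) (hX : X ≠ R) (hY : Y ≠ R) (hYX : Y.1 ≤ R.1 ⊔ X.1)
    (hXPQ : ¬ X.1 ≤ P.1 ⊔ Q.1) : K X = K Y := by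
  have hYPQ : ¬ Y.1 ≤ P.1 ⊔ Q.1 := fun hYPQ => hXPQ <| by
    rw [← sup_eq_of_le (finrank_sup_eq_two hPQ) hR hYPQ hY.symm,
      sup_eq_sup_of_le_sup hYX hY hX]
    exact le_sup_right
  have hXP : X ≠ P := by rintro rfl; exact hXPQ le_sup_left
  have hYQ : Y ≠ Q := by rintro rfl; exact hYPQ le_sup_right
  obtain ⟨Z, hZ⟩ : ∃ Z : PSub F v 1, Z.1 ≤ (P.1 ⊔ X.1) ⊓ (Q.1 ⊔ Y.1) := by
    apply exists_point_le_inf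
    have hplane : (P.1 ⊔ X.1) ⊔ (Q.1 ⊔ Y.1) ≤ (P.1 ⊔ Q.1) ⊔ X.1 :=
      sup_le (sup_le (le_sup_left.trans le_sup_left) le_sup_right)
        (sup_le (le_sup_right.trans le_sup_left)
          (hYX.trans (sup_le (hR.trans le_sup_left) le_sup_right)))
    have := (Submodule.finrank_mono hplane).trans
      (Submodule.finrank_add_le_finrank_add_finrank _ X.1)
    rw [finrank_sup_eq_two hPQ, X.2] at this
    rw [finrank_sup_eq_two hXP.symm, finrank_sup_eq_two hYQ.symm]
    omega
  have hZPX : Z.1 ≤ P.1 ⊔ X.1 := hZ.trans inf_le_left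
  have hZQY : Z.1 ≤ Q.1 ⊔ Y.1 := hZ.trans inf_le_right
  have hZP : Z ≠ P := fun hZP => hYPQ <| by
    rw [hZP] at hZQY
    rw [sup_comm, sup_eq_sup_of_le_sup hZQY hPQ hYQ]
    exact le_sup_right
  have hZQ : Z ≠ Q := fun hZQ => hXPQ <| by
    rw [hZQ] at hZPX
    rw [sup_eq_sup_of_le_sup hZPX hPQ.symm hXP]
    exact le_sup_right
  exact (hP X Z hXP hZP hZPX).trans (hQ Y Z hYQ hZQ hZQY).symm

lemma IsRadialPoint.of_le_sup (hP : IsRadialPoint K P) (hQ : IsRadialPoint K Q) (hPQ : P ≠ Q)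
    (hKPQ : K P = K Q) (hR : R.1 ≤ P.1 ⊔ Q.1) : IsRadialPoint K R := by
  intro X Y hX hY hYX
  by_cases hXPQ : X.1 ≤ P.1 ⊔ Q.1
  · have hRX : R.1 ⊔ X.1 = P.1 ⊔ Q.1 := sup_eq_of_le (finrank_sup_eq_two hPQ) hR hXPQ hX.symm
    rw [hQ.apply_eq_of_le_sup hPQ hKPQ hXPQ, hQ.apply_eq_of_le_sup hPQ hKPQ (hYX.trans hRX.le)]
  · exact hP.apply_eq_of_not_le_sup hQ hPQ hR hX hY hYX hXPQ

end TwoRadialPoints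

theorem stmt2_general {F : Type*} [Field F] (q : ℕ)
    {v : ℕ} (t : ℕ)
    (K : PSub F v 1 → ℕ)
    (hK : ∀ L : PSub F v 2, pmult K L.1 ≡ t [MOD q])
    (P Q : PSub F v 1) (hPQ : P ≠ Q)
    (hP : IsLiftingPoint q t K P) (hQ : IsLiftingPoint q t K Q) :
    ∀ R : PSub F v 1, R.1 ≤ P.1 ⊔ Q.1 → IsLiftingPoint q t K R := by
  intro R hR
  have hKPQ : K P = K Q := by rw [hP.apply_self, hQ.apply_self]
  refine isLiftingPoint_of_isRadialPoint hK ?_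
    (hP.isRadialPoint.of_le_sup hQ.isRadialPoint hPQ hKPQ hR)
  rw [hQ.isRadialPoint.apply_eq_of_le_sup hPQ hKPQ hR, hP.apply_self]

/-- If `P` and `Q` are two distinct lifting points of a lifted `(t mod q)`-arc
`K` in `PG(v-1,q)`, then every point of the line through `P` and `Q` is a
lifting point of `K`. -/
theorem stmt2 {F : Type*} [Field F] [Fintype F] (q : ℕ) (hq : Fintype.card F = q)
    {v : ℕ} (hv : 3 ≤ v) (t : ℕ) (ht1 : 1 ≤ t) (ht2 : t ≤ q - 1)
    (K : PSub F v 1 → ℕ)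
    (hK : ∀ L : PSub F v 2, pmult K L.1 ≡ t [MOD q])
    (P Q : PSub F v 1) (hPQ : P ≠ Q)
    (hP : IsLiftingPoint q t K P) (hQ : IsLiftingPoint q t K Q) :
    ∀ R : PSub F v 1, R.1 ≤ P.1 ⊔ Q.1 → IsLiftingPoint q t K R :=
  stmt2_general q t K hK P Q hPQ hP hQ
end

section
/- Let q be a prime power, v ≥ 2, and 1 ≤ t ≤ q − 1. Every (t mod q)-arc K in PG(v−1,q) of cardinality exactly [v−1]_q · t is a sum of t hyperplanes: there exist hyperplanes H_1, …, H_t (not necessarily distinct) such that K(P) = #{i ∈ {1,…,t} : P lies in H_i} for every point P. -/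
open Module

/-! Induction on `t`. Through a point `P` with `K P = 0` pass `[v-1]_q` lines; each carries at
least `t` (as `t < q`) and together they carry `#K = [v-1]_q t`, so each carries exactly `t`.
Hence every hyperplane through such a point has multiplicity `[v-2]_q t`. If every hyperplane
contained such a point, counting point–hyperplane incidences would give
`[v]_q [v-2]_q t = [v-1]_q² t`, contradicting `[v-1]_q² = [v]_q [v-2]_q + q^(v-2)`. So some
hyperplane `H` has `K ≥ 1` at each of its points, and `K - charArc H` is a `(t-1 mod q)`-arc of
cardinality `[v-1]_q (t-1)`. -/

open Finset

/-- The Gaussian integer `[k]_q = 1 + q + ⋯ + q^(k-1)`. -/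
def qint (q k : ℕ) : ℕ := ∑ i ∈ range k, q ^ i

lemma qint_succ (q k : ℕ) : qint q (k + 1) = q * qint q k + 1 := geom_sum_succ

lemma qint_succ' (q k : ℕ) : qint q (k + 1) = qint q k + q ^ k := sum_range_succ _ _

lemma qint_eq_div {q : ℕ} (hq : 2 ≤ q) (k : ℕ) : qint q k = (q ^ k - 1) / (q - 1) :=
  Nat.geomSum_eq hq k

lemma qint_succ_mul_self (q b : ℕ) :
    qint q (b + 1) * qint q (b + 1) = qint q (b + 2) * qint q b + q ^ b := by
  have h := qint_succ' q b
  rw [qint_succ q (b + 1), qint_succ q b] at *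
  nlinarith

namespace Submodule

variable {F : Type*} [Field F] [Fintype F]

lemma card_points_le {W : Type*} [AddCommGroup W] [Module F W] (S : Submodule F W) {k : ℕ}
    (hS : finrank F S = k) :
    Nat.card {P : {P : Submodule F W // finrank F P = 1} // P.1 ≤ S} =
      qint (Fintype.card F) k := by
  calc Nat.card {P : {P : Submodule F W // finrank F P = 1} // P.1 ≤ S}
      = Nat.card {P : {P : Submodule F W // P ≤ S} // finrank F P.1 = 1} :=
        Nat.card_congr <| (Equiv.subtypeSubtypeEquivSubtypeInter
          (fun P : Submodule F W => finrank F P = 1) (· ≤ S)).trans <|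
          (Equiv.subtypeEquivRight fun _ => and_comm).trans
            (Equiv.subtypeSubtypeEquivSubtypeInter (· ≤ S)
              (fun P : Submodule F W => finrank F P = 1)).symm
    _ = Nat.card {Q : Submodule F S // finrank F Q = 1} :=
        Nat.card_congr <| ((MapSubtype.orderIso S).toEquiv.subtypeEquiv
          fun Q => by rw [← finrank_map_subtype_eq S Q]; rfl).symm
    _ = Nat.card (Projectivization F S) :=
        Nat.card_congr (Projectivization.equivSubmodule F S).symm
    _ = qint (Fintype.card F) k := by
        rw [Projectivization.card_of_finrank F S hS, Nat.card_eq_fintype_card]; rfl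

/-- Hyperplanes through `S` correspond, via the annihilator, to points of `S.dualAnnihilator`. -/
lemma card_hyperplanes_ge {V : Type*} [AddCommGroup V] [Module F V] {n : ℕ}
    (hV : finrank F V = n) (hn : 1 ≤ n) (S : Submodule F V) {k : ℕ} (hS : finrank F S = k) :
    Nat.card {H : {H : Submodule F V // finrank F H = n - 1} // S ≤ H.1} =
      qint (Fintype.card F) (n - k) := by
  have : FiniteDimensional F V := Module.finite_of_finrank_pos (by omega)
  have hdual (T : Submodule F V) : finrank F T + finrank F T.dualAnnihilator = n :=
    hV ▸ Subspace.finrank_add_finrank_dualAnnihilator_eq T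
  rw [← card_points_le S.dualAnnihilator (k := n - k) (by have := hdual S; omega)]
  refine Nat.card_congr
    (((Subspace.orderIsoFiniteDimensional (K := F) (V := V)).toEquiv.subtypeEquiv
      fun H => ?_).subtypeEquiv fun H => ?_)
  · show finrank F H = n - 1 ↔ finrank F H.dualAnnihilator = 1
    have := hdual H; omega
  · exact Subspace.dualAnnihilator_le_dualAnnihilator_iff.symm

end Submodule

section Arcs

open scoped Classical

namespace PSub

variable {F : Type*} [Field F] {v : ℕ}

lemma eq_of_le_s10 {k : ℕ} {S T : PSub F v k} (h : S.1 ≤ T.1) : S = T :=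
  Subtype.ext (Submodule.eq_of_le_of_finrank_eq h (S.2.trans T.2.symm))

lemma finrank_sup_eq_two {P Q : PSub F v 1} (h : P ≠ Q) : finrank F ↥(P.1 ⊔ Q.1) = 2 := by
  have hlt : P.1 ⊓ Q.1 < P.1 := inf_lt_left.2 fun hle => h (eq_of_le_s10 hle)
  have hinf := Submodule.finrank_lt_finrank_of_lt hlt
  have := Submodule.finrank_sup_add_finrank_inf_eq P.1 Q.1
  rw [P.2] at hinf
  rw [P.2, Q.2] at this
  omega

lemma finrank_inf_add_one (hv : 1 ≤ v) (H : PSub F v (v - 1)) {S : Submodule F (Fin v → F)}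
    (h : ¬ S ≤ H.1) : finrank F ↥(S ⊓ H.1) + 1 = finrank F S := by
  have hlt := Submodule.finrank_lt_finrank_of_lt (lt_of_le_not_ge le_sup_right
    fun hle => h (le_sup_left.trans hle) : H.1 < S ⊔ H.1)
  have hle := Submodule.finrank_le (S ⊔ H.1)
  have := Submodule.finrank_sup_add_finrank_inf_eq S H.1
  rw [H.2] at hlt this
  rw [Module.finrank_fin_fun] at hle
  omega

variable [Fintype F]

noncomputable instance (k : ℕ) : Fintype (PSub F v k) := Fintype.ofFinite _

lemma card_points_le (S : Submodule F (Fin v → F)) {k : ℕ} (hS : finrank F S = k) :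
    #{P : PSub F v 1 | P.1 ≤ S} = qint (Fintype.card F) k := by
  rw [← Fintype.card_subtype, ← Nat.card_eq_fintype_card, S.card_points_le hS]

lemma card_hyperplanes_ge (hv : 1 ≤ v) (S : Submodule F (Fin v → F)) {k : ℕ}
    (hS : finrank F S = k) :
    #{H : PSub F v (v - 1) | S ≤ H.1} = qint (Fintype.card F) (v - k) := by
  rw [← Fintype.card_subtype, ← Nat.card_eq_fintype_card,
    S.card_hyperplanes_ge (Module.finrank_fin_fun F) hv hS]

lemma card_hyperplanes (hv : 1 ≤ v) :
    Fintype.card (PSub F v (v - 1)) = qint (Fintype.card F) v := by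
  simpa using card_hyperplanes_ge hv ⊥ (finrank_bot F _)

noncomputable def pencil (S : Submodule F (Fin v → F)) (P : PSub F v 1) : Finset (PSub F v 2) :=
  {L | P.1 ≤ L.1 ∧ L.1 ≤ S}

lemma mem_pencil {S : Submodule F (Fin v → F)} {P : PSub F v 1} {L : PSub F v 2} :
    L ∈ pencil S P ↔ P.1 ≤ L.1 ∧ L.1 ≤ S := by
  simp [pencil]

lemma card_filter_pencil {S : Submodule F (Fin v → F)} {P Q : PSub F v 1} (hQ : Q.1 ≤ S)
    (hPQ : P ≠ Q) (hP : P.1 ≤ S) : #{L ∈ pencil S P | Q.1 ≤ L.1} = 1 := by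
  rw [card_eq_one]
  refine ⟨⟨P.1 ⊔ Q.1, finrank_sup_eq_two hPQ⟩, ?_⟩
  ext L
  simp only [mem_filter, mem_pencil, mem_singleton]
  constructor
  · rintro ⟨⟨hPL, -⟩, hQL⟩
    exact (eq_of_le_s10 (sup_le hPL hQL)).symm
  · rintro rfl
    exact ⟨⟨le_sup_left, sup_le hP hQ⟩, le_sup_right⟩

end PSub

variable {F : Type*} [Field F] [Fintype F] {v : ℕ}

lemma pmult_eq_sum_ite (K : PSub F v 1 → ℕ) (S : Submodule F (Fin v → F)) :
    pmult K S = ∑ P, if P.1 ≤ S then K P else 0 := by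
  rw [pmult, finsum_eq_sum_of_fintype]
  exact sum_congr rfl fun P _ => finsum_eq_if

lemma pcard_eq_sum (K : PSub F v 1 → ℕ) : pcard K = ∑ P, K P :=
  finsum_eq_sum_of_fintype K

lemma pmult_top (K : PSub F v 1 → ℕ) : pmult K ⊤ = pcard K := by
  simp [pmult_eq_sum_ite, pcard_eq_sum]

lemma pmult_add (K K' : PSub F v 1 → ℕ) (S : Submodule F (Fin v → F)) :
    pmult (K + K') S = pmult K S + pmult K' S := by
  simp only [pmult_eq_sum_ite, Pi.add_apply, ← sum_add_distrib, ite_add_ite, add_zero]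

lemma pcard_add (K K' : PSub F v 1 → ℕ) : pcard (K + K') = pcard K + pcard K' := by
  simp only [← pmult_top, pmult_add]

lemma sum_pmult_eq {k : ℕ} (K : PSub F v 1 → ℕ) (T : Finset (PSub F v k)) :
    ∑ S ∈ T, pmult K S.1 = ∑ P, #{S ∈ T | P.1 ≤ S.1} * K P := by
  simp only [pmult_eq_sum_ite]
  rw [sum_comm]
  exact sum_congr rfl fun P _ => by rw [← sum_filter, sum_const, smul_eq_mul]

/-- Every point of `S` other than `P` lies on exactly one line of the pencil. -/
lemma sum_pmult_pencil (K : PSub F v 1 → ℕ) {S : Submodule F (Fin v → F)} {P : PSub F v 1}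
    (hP : P.1 ≤ S) :
    ∑ L ∈ PSub.pencil S P, pmult K L.1 + K P = pmult K S + #(PSub.pencil S P) * K P := by
  set N := #(PSub.pencil S P)
  have hcount (Q : PSub F v 1) :
      #{L ∈ PSub.pencil S P | Q.1 ≤ L.1} + (if Q = P then 1 else 0) =
        (if Q.1 ≤ S then 1 else 0) + (if Q = P then N else 0) := by
    by_cases hQP : Q = P
    · subst hQP
      rw [filter_true_of_mem fun L hL => (PSub.mem_pencil.1 hL).1]
      simp [hP, N, add_comm]
    by_cases hQS : Q.1 ≤ S
    · simp [hQP, hQS, PSub.card_filter_pencil hQS (Ne.symm hQP) hP]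
    · rw [filter_false_of_mem fun L hL hQL => hQS (hQL.trans (PSub.mem_pencil.1 hL).2)]
      simp [hQP, hQS]
  calc ∑ L ∈ PSub.pencil S P, pmult K L.1 + K P
      = ∑ Q, (#{L ∈ PSub.pencil S P | Q.1 ≤ L.1} + if Q = P then 1 else 0) * K Q := by
        simp [sum_pmult_eq, add_mul, sum_add_distrib]
    _ = ∑ Q, ((if Q.1 ≤ S then 1 else 0) + if Q = P then N else 0) * K Q := by
        simp_rw [hcount]
    _ = pmult K S + N * K P := by
        simp [add_mul, sum_add_distrib, pmult_eq_sum_ite]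

noncomputable def charArc (S : Submodule F (Fin v → F)) : PSub F v 1 → ℕ :=
  fun P => if P.1 ≤ S then 1 else 0

lemma pmult_charArc (S T : Submodule F (Fin v → F)) :
    pmult (charArc S) T = qint (Fintype.card F) (finrank F ↥(T ⊓ S)) := by
  rw [← PSub.card_points_le _ rfl, pmult_eq_sum_ite, card_filter]
  simp [charArc, le_inf_iff, ite_and]

lemma PSub.card_pencil {S : Submodule F (Fin v → F)} {P : PSub F v 1} (hP : P.1 ≤ S) {k : ℕ}
    (hS : finrank F S = k) : #(PSub.pencil S P) = qint (Fintype.card F) (k - 1) := by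
  set q := Fintype.card F
  have hq : 0 < q := Fintype.card_pos
  obtain ⟨m, rfl⟩ : ∃ m, k = m + 1 :=
    ⟨k - 1, by have := Submodule.finrank_mono hP; rw [P.2, hS] at this; omega⟩
  have hline : ∀ L ∈ PSub.pencil S P, pmult (charArc ⊤) L.1 = q + 1 := fun L _ => by
    rw [pmult_charArc, inf_top_eq, L.2, qint_succ]
    simp [qint, q]
  have h := sum_pmult_pencil (charArc ⊤) hP
  rw [sum_congr rfl hline, sum_const, smul_eq_mul, pmult_charArc, inf_top_eq, hS, qint_succ]
    at h
  simp only [charArc, le_top, if_true, mul_one] at h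
  rw [Nat.add_sub_cancel]
  exact Nat.eq_of_mul_eq_mul_left hq (by linarith)

lemma pcard_charArc (H : PSub F v (v - 1)) :
    pcard (charArc H.1) = qint (Fintype.card F) (v - 1) := by
  rw [← pmult_top, pmult_charArc, top_inf_eq, H.2]

lemma sum_pmult_hyperplanes (hv : 1 ≤ v) (K : PSub F v 1 → ℕ) :
    ∑ H : PSub F v (v - 1), pmult K H.1 = qint (Fintype.card F) (v - 1) * pcard K := by
  rw [sum_pmult_eq, pcard_eq_sum, mul_sum]
  exact sum_congr rfl fun P _ => by rw [PSub.card_hyperplanes_ge hv P.1 P.2]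

/-- `K` is a `(t mod q)`-arc with `q = |F|`. -/
def IsModArc (t : ℕ) (K : PSub F v 1 → ℕ) : Prop :=
  ∀ L : PSub F v 2, pmult K L.1 ≡ t [MOD Fintype.card F]

lemma isModArc_charArc (hv : 1 ≤ v) (H : PSub F v (v - 1)) : IsModArc 1 (charArc H.1) := by
  intro L
  rw [pmult_charArc]
  by_cases hLH : L.1 ≤ H.1
  · rw [inf_eq_left.2 hLH, L.2, qint_succ]
    simp [qint, Nat.ModEq]
  · have := PSub.finrank_inf_add_one hv H hLH
    rw [L.2] at this
    rw [show finrank F ↥(L.1 ⊓ H.1) = 1 by omega]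
    simp [qint, Nat.ModEq]

namespace IsModArc

variable {t : ℕ} {K : PSub F v 1 → ℕ}

lemma le_pmult (hK : IsModArc t K) (ht : t < Fintype.card F) (L : PSub F v 2) :
    t ≤ pmult K L.1 :=
  calc t = t % Fintype.card F := (Nat.mod_eq_of_lt ht).symm
    _ = pmult K L.1 % Fintype.card F := (hK L).symm
    _ ≤ pmult K L.1 := Nat.mod_le _ _

lemma pmult_line_eq_of_zero (hK : IsModArc t K) (ht : t < Fintype.card F)
    (hcard : pcard K = qint (Fintype.card F) (v - 1) * t) {P : PSub F v 1} (hP : K P = 0)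
    {L : PSub F v 2} (hPL : P.1 ≤ L.1) : pmult K L.1 = t := by
  have hsum := sum_pmult_pencil K (le_top : P.1 ≤ ⊤)
  rw [hP, mul_zero, add_zero, add_zero, pmult_top, hcard,
    ← PSub.card_pencil le_top ((finrank_top F _).trans (Module.finrank_fin_fun F)),
    ← smul_eq_mul, ← sum_const] at hsum
  exact ((sum_eq_sum_iff_of_le fun L _ => hK.le_pmult ht L).1 hsum.symm L
    (PSub.mem_pencil.2 ⟨hPL, le_top⟩)).symm

lemma pmult_hyperplane_eq_of_zero (hK : IsModArc t K) (ht : t < Fintype.card F)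
    (hcard : pcard K = qint (Fintype.card F) (v - 1) * t) {P : PSub F v 1} (hP : K P = 0)
    {H : PSub F v (v - 1)} (hPH : P.1 ≤ H.1) :
    pmult K H.1 = qint (Fintype.card F) (v - 2) * t := by
  have hsum := sum_pmult_pencil K hPH
  rw [hP, mul_zero, add_zero, add_zero,
    sum_congr rfl fun L hL => hK.pmult_line_eq_of_zero ht hcard hP (PSub.mem_pencil.1 hL).1,
    sum_const, smul_eq_mul, PSub.card_pencil hPH H.2] at hsum
  rw [← hsum, Nat.sub_sub]

lemma exists_hyperplane_pos (hv : 2 ≤ v) (hK : IsModArc t K) (ht : t < Fintype.card F)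
    (ht0 : t ≠ 0) (hcard : pcard K = qint (Fintype.card F) (v - 1) * t) :
    ∃ H : PSub F v (v - 1), ∀ P : PSub F v 1, P.1 ≤ H.1 → K P ≠ 0 := by
  by_contra! h
  choose P hPH hP using h
  have hsum := sum_pmult_hyperplanes (by omega) K
  rw [sum_congr rfl fun H _ => hK.pmult_hyperplane_eq_of_zero ht hcard (hP H) (hPH H),
    sum_const, card_univ, PSub.card_hyperplanes (by omega), hcard, smul_eq_mul] at hsum
  obtain ⟨b, rfl⟩ : ∃ b, v = b + 2 := ⟨v - 2, by omega⟩
  have hsq := qint_succ_mul_self (Fintype.card F) b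
  have hpos : 0 < Fintype.card F ^ b * t := by
    have := Fintype.card_pos (α := F); positivity
  simp only [Nat.add_sub_cancel, show b + 2 - 1 = b + 1 by omega] at hsum
  nlinarith

lemma of_add_charArc (hv : 1 ≤ v) {H : PSub F v (v - 1)}
    (hK : IsModArc (t + 1) (K + charArc H.1)) : IsModArc t K := fun L =>
  Nat.ModEq.add_right_cancel (isModArc_charArc hv H L) (pmult_add K _ L.1 ▸ hK L)

theorem exists_eq_sum_charArc (hv : 2 ≤ v) (ht : t < Fintype.card F) (hK : IsModArc t K)
    (hcard : pcard K = qint (Fintype.card F) (v - 1) * t) :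
    ∃ Hs : Fin t → PSub F v (v - 1), K = ∑ i, charArc (Hs i).1 := by
  induction t generalizing K with
  | zero =>
    refine ⟨Fin.elim0, funext fun P => ?_⟩
    rw [mul_zero, pcard_eq_sum, sum_eq_zero_iff] at hcard
    simpa using hcard P (mem_univ P)
  | succ t ih =>
    obtain ⟨H, hH⟩ := hK.exists_hyperplane_pos hv ht t.succ_ne_zero hcard
    obtain ⟨K, rfl⟩ : ∃ K', K = K' + charArc H.1 := ⟨K - charArc H.1, funext fun P => by
      by_cases hPH : P.1 ≤ H.1
      · have := hH P hPH; simp [charArc, hPH]; omega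
      · simp [charArc, hPH]⟩
    rw [pcard_add, pcard_charArc, mul_add_one] at hcard
    obtain ⟨Hs, rfl⟩ :=
      ih (by omega) (hK.of_add_charArc (by omega)) (Nat.add_right_cancel hcard)
    refine ⟨Fin.cons H Hs, ?_⟩
    rw [Fin.sum_univ_succ, add_comm]
    simp

end IsModArc

end Arcs

theorem stmt10_general {F : Type*} [Field F] [Fintype F] (q : ℕ) (hq : Fintype.card F = q)
    {v : ℕ} (hv : 2 ≤ v) (t : ℕ) (ht2 : t ≤ q - 1)
    (K : PSub F v 1 → ℕ)
    (hK : ∀ L : PSub F v 2, pmult K L.1 ≡ t [MOD q])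
    (hcard : pcard K = (q ^ (v - 1) - 1) / (q - 1) * t) :
    ∃ Hs : Fin t → PSub F v (v - 1),
      ∀ P : PSub F v 1, K P = Nat.card {i : Fin t // P.1 ≤ (Hs i).1} := by
  subst hq
  have hq : 2 ≤ Fintype.card F := Fintype.one_lt_card
  rw [← qint_eq_div hq] at hcard
  obtain ⟨Hs, rfl⟩ := IsModArc.exists_eq_sum_charArc hv (by omega) hK hcard
  refine ⟨Hs, fun P => ?_⟩
  classical
  rw [Nat.card_eq_fintype_card, Fintype.card_subtype, card_filter, Finset.sum_apply]
  rfl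

/-- Every `(t mod q)`-arc in `PG(v-1,q)` of cardinality exactly `[v-1]_q * t`
is a sum of `t` (not necessarily distinct) hyperplanes. -/
theorem stmt10 {F : Type*} [Field F] [Fintype F] (q : ℕ) (hq : Fintype.card F = q)
    {v : ℕ} (hv : 2 ≤ v) (t : ℕ) (ht1 : 1 ≤ t) (ht2 : t ≤ q - 1)
    (K : PSub F v 1 → ℕ)
    (hK : ∀ L : PSub F v 2, pmult K L.1 ≡ t [MOD q])
    (hcard : pcard K = (q ^ (v - 1) - 1) / (q - 1) * t) :
    ∃ Hs : Fin t → PSub F v (v - 1),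
      ∀ P : PSub F v 1, K P = Nat.card {i : Fin t // P.1 ≤ (Hs i).1} :=
  stmt10_general q hq hv t ht2 K hK hcard
end

section
/- Let K be an arc in PG(3,5) of cardinality 104 such that K(H) ≤ 22 for every hyperplane (plane) H and K(H0) = 22 for some hyperplane H0 (i.e. a (104,22)-arc). Then: (a) for every hyperplane H and every line L contained in H, 5·K(L) ≤ 6 + K(H); (b) K(P) ≤ 1 for every point P, K(L) ≤ 5 for every line L, and there exist a point of multiplicity 1 and a line of multiplicity 5; (c) there is no hyperplane H with K(H) ∈ {2, 3, 7, 8, 12, 13, 17, 18}. -/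
open Module

instance : Fact (Nat.Prime 5) := ⟨by norm_num⟩

/-!
Counting the pencil of planes through a line, and of lines through a point, gives
`5 K(L) ≤ K(H) + 6`, `K(L) ≤ 5` and `K(P) ≤ 1`; so `K` is a set of points, and a `22`-plane
forces a `5`-line since its `31` lines have total multiplicity `6 * 22 > 31 * 4`.

In a plane `H` with `K(H) = m` every line has multiplicity at most `t = ⌊(6 + m) / 5⌋`, and the
six lines of `H` through a point `P` have total multiplicity `m + 5 K(P)`. For `m = 2, 3, 8` a
point of `K` gives `m + 5 ≤ 6 t`, which fails. For `m = 7, 13` equality holds, so every line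
meeting `K` has multiplicity `t` and a point off `K` gives `t ∣ m`. For `m = 12, 17, 18` the
equations `∑ 1 = 31`, `∑ K(L) = 6 m`, `∑ K(L) (K(L) - 1) = m (m - 1)` over the lines of `H`,
combined into a suitable `∑ (K(L) - a) (K(L) - b)`, determine or bound the number of lines
missing `K`, which is incompatible with how such lines meet.
-/

open Finset
open scoped Classical

theorem Finset.sum_card_le_card_biUnion_add_choose_two {ι α : Type*} [DecidableEq α]
    (Z : Finset ι) (P : ι → Finset α) (hP : ∀ i ∈ Z, ∀ j ∈ Z, i ≠ j → #(P i ∩ P j) ≤ 1) :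
    ∑ i ∈ Z, #(P i) ≤ #(Z.biUnion P) + (#Z).choose 2 := by
  induction Z using Finset.induction_on with
  | empty => simp
  | insert a Z ha ih =>
    have hinter : #(P a ∩ Z.biUnion P) ≤ #Z := by
      rw [inter_biUnion]
      refine card_biUnion_le.trans (card_eq_sum_ones Z ▸ sum_le_sum fun j hj => ?_)
      exact hP a (mem_insert_self a Z) j (mem_insert_of_mem hj) (ne_of_mem_of_not_mem hj ha).symm
    have hunion := card_union_add_card_inter (P a) (Z.biUnion P)
    have hchoose : (#Z + 1).choose 2 = (#Z).choose 2 + #Z := by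
      rw [Nat.choose_succ_succ', Nat.choose_one_right, add_comm]
    rw [sum_insert ha, biUnion_insert, card_insert_of_notMem ha, hchoose]
    have := ih fun i hi j hj => hP i (mem_insert_of_mem hi) j (mem_insert_of_mem hj)
    omega

theorem Finset.sum_le_sum_add_card_sdiff_mul {α : Type*} [DecidableEq α] {s r : Finset α}
    (h : r ⊆ s) {f : α → ℕ} {t : ℕ} (hf : ∀ a ∈ s, f a ≤ t) :
    ∑ a ∈ s, f a ≤ ∑ a ∈ r, f a + (#s - #r) * t := by
  rw [← sum_sdiff h, add_comm, ← card_sdiff_of_subset h, ← smul_eq_mul]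
  exact add_le_add_right (sum_le_card_nsmul _ _ _ fun a ha => hf a (mem_sdiff.mp ha).1) _

namespace PG

section Subspaces

variable {F V : Type*} [Field F] [AddCommGroup V] [Module F V]

section FiniteDimensional

variable [FiniteDimensional F V]

theorem finrank_sup_of_finrank_eq_one {S p : Submodule F V} (hp : finrank F p = 1)
    (hpS : ¬p ≤ S) : finrank F ↥(S ⊔ p) = finrank F S + 1 := by
  have hlt : S ⊓ p < p := inf_le_right.lt_of_ne fun h => hpS (h ▸ inf_le_left)
  have := Submodule.finrank_lt_finrank_of_lt hlt
  have := Submodule.finrank_sup_add_finrank_inf_eq S p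
  omega

theorem not_le_of_finrank_eq_one {p q : Submodule F V} (hp : finrank F p = 1)
    (hq : finrank F q = 1) (hne : p ≠ q) : ¬p ≤ q := fun h =>
  hne (Submodule.eq_of_le_of_finrank_le h (by rw [hp, hq]))

theorem sup_eq_of_finrank_eq_succ {S p U : Submodule F V} (hp : finrank F p = 1)
    (hpS : ¬p ≤ S) (hU : finrank F U = finrank F S + 1) (hSU : S ≤ U) (hpU : p ≤ U) :
    S ⊔ p = U :=
  Submodule.eq_of_le_of_finrank_le (sup_le hSU hpU)
    (by rw [hU, finrank_sup_of_finrank_eq_one hp hpS])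

theorem finrank_inf_eq_one_of_finrank_eq_two {W L₁ L₂ : Submodule F V} (hW : finrank F W = 3)
    (h₁ : finrank F L₁ = 2) (h₂ : finrank F L₂ = 2) (hL₁ : L₁ ≤ W) (hL₂ : L₂ ≤ W)
    (hne : L₁ ≠ L₂) : finrank F ↥(L₁ ⊓ L₂) = 1 := by
  have hlt : L₁ < L₁ ⊔ L₂ := le_sup_left.lt_of_ne fun h =>
    hne (Submodule.eq_of_le_of_finrank_le (h ▸ le_sup_right) (by omega)).symm
  have := Submodule.finrank_lt_finrank_of_lt hlt
  have := Submodule.finrank_mono (sup_le hL₁ hL₂)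
  have := Submodule.finrank_sup_add_finrank_inf_eq L₁ L₂
  omega

end FiniteDimensional

noncomputable instance [Finite V] : Fintype (Submodule F V) := Fintype.ofFinite _

noncomputable def subspacesBetween [Finite V] (k : ℕ) (S T : Submodule F V) :
    Finset (Submodule F V) :=
  univ.filter fun U => finrank F U = k ∧ S ≤ U ∧ U ≤ T

theorem mem_subspacesBetween [Finite V] {k : ℕ} {S T U : Submodule F V} :
    U ∈ subspacesBetween k S T ↔ finrank F U = k ∧ S ≤ U ∧ U ≤ T := by
  simp [subspacesBetween]

theorem filter_le_subspacesBetween [Finite V] {k : ℕ} {S T U : Submodule F V} (h : U ≤ T) :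
    (subspacesBetween k S T).filter (· ≤ U) = subspacesBetween k S U := by
  ext X
  simp only [mem_filter, mem_subspacesBetween]
  exact ⟨fun hX => ⟨hX.1.1, hX.1.2.1, hX.2⟩, fun hX => ⟨⟨hX.1, hX.2.1, hX.2.2.trans h⟩, hX.2.2⟩⟩

theorem filter_ge_subspacesBetween [Finite V] {k : ℕ} {S T U : Submodule F V} (h : S ≤ U) :
    (subspacesBetween k S T).filter (U ≤ ·) = subspacesBetween k U T := by
  ext X
  simp only [mem_filter, mem_subspacesBetween]
  exact ⟨fun hX => ⟨hX.1.1, hX.2, hX.1.2.2⟩, fun hX => ⟨⟨hX.1, h.trans hX.2.1, hX.2.2⟩, hX.2.1⟩⟩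

theorem subspacesBetween_subset_subspacesBetween [Finite V] {k : ℕ} {S S' T T' : Submodule F V}
    (hS : S' ≤ S) (hT : T ≤ T') : subspacesBetween k S T ⊆ subspacesBetween k S' T' := by
  intro U hU
  obtain ⟨hU, hSU, hUT⟩ := mem_subspacesBetween.mp hU
  exact mem_subspacesBetween.mpr ⟨hU, hS.trans hSU, hUT.trans hT⟩

theorem card_points_inter_le_one [Finite V] {L₁ L₂ : Submodule F V} (h₁ : finrank F L₁ = 2)
    (h₂ : finrank F L₂ = 2) (hne : L₁ ≠ L₂) :
    #(subspacesBetween 1 ⊥ L₁ ∩ subspacesBetween 1 ⊥ L₂) ≤ 1 := by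
  refine card_le_one.mpr fun p hp q hq => by_contra fun hpq => hne ?_
  simp only [mem_inter, mem_subspacesBetween] at hp hq
  have hqp := not_le_of_finrank_eq_one hq.1.1 hp.1.1 (Ne.symm hpq)
  rw [← sup_eq_of_finrank_eq_succ hq.1.1 hqp (by rw [h₁, hp.1.1]) hp.1.2.2 hq.1.2.2,
    sup_eq_of_finrank_eq_succ hq.1.1 hqp (by rw [h₂, hp.1.1]) hp.2.2.2 hq.2.2.2]

section Counting

variable [Fintype F] [Fintype V]

theorem card_filter_mem_eq (W : Submodule F V) :
    #(univ.filter (· ∈ W)) = Fintype.card F ^ finrank F W := by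
  rw [← card_eq_pow_finrank (K := F) (V := W), ← Fintype.card_subtype]

/-- The vectors of `T` outside `S` are partitioned according to the subspace `S ⊔ span {x}`,
each part being `U \ S` for a subspace `U` of rank one more than `S`. -/
theorem card_subspacesBetween_mul {S T : Submodule F V} (hST : S ≤ T) :
    #(subspacesBetween (finrank F S + 1) S T) *
        (Fintype.card F ^ (finrank F S + 1) - Fintype.card F ^ finrank F S) =
      Fintype.card F ^ finrank F T - Fintype.card F ^ finrank F S := by
  have card_diff : ∀ U : Submodule F V, S ≤ U →
      #(univ.filter fun x => x ∈ U ∧ x ∉ S) =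
        Fintype.card F ^ finrank F U - Fintype.card F ^ finrank F S := by
    intro U hSU
    rw [← card_filter_mem_eq, ← card_filter_mem_eq, ← card_sdiff_of_subset]
    · congr 1; ext x; simp
    · intro x; simpa using fun hx => hSU hx
  have hspan : ∀ x, x ∉ S → ¬(F ∙ x) ≤ S := fun x hx h =>
    hx (h (Submodule.mem_span_singleton_self x))
  have hrank : ∀ x, x ∉ S → finrank F ↥(S ⊔ F ∙ x) = finrank F S + 1 := fun x hx =>
    finrank_sup_of_finrank_eq_one (finrank_span_singleton fun h => hx (h ▸ S.zero_mem))
      (hspan x hx)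
  rw [← card_diff T hST, card_eq_sum_card_fiberwise (f := fun x => S ⊔ F ∙ x)
    (t := subspacesBetween (finrank F S + 1) S T), ← smul_eq_mul, ← sum_const]
  · refine sum_congr rfl fun U hU => ?_
    obtain ⟨hU, hSU, hUT⟩ := mem_subspacesBetween.mp hU
    rw [← hU, ← card_diff U hSU]
    congr 1
    ext x
    simp only [mem_filter, mem_univ, true_and]
    constructor
    · rintro ⟨hxU, hxS⟩
      exact ⟨⟨hUT hxU, hxS⟩, sup_eq_of_finrank_eq_succ (finrank_span_singleton
        fun h => hxS (h ▸ S.zero_mem)) (hspan x hxS) hU hSU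
        ((Submodule.span_singleton_le_iff_mem _ _).mpr hxU)⟩
    · rintro ⟨⟨-, hxS⟩, rfl⟩
      exact ⟨le_sup_right (a := S) (Submodule.mem_span_singleton_self x), hxS⟩
  · intro x hx
    simp only [coe_filter, mem_univ, true_and, Set.mem_ofPred_eq] at hx
    exact mem_subspacesBetween.mpr ⟨hrank x hx.2, le_sup_left,
      sup_le hST ((Submodule.span_singleton_le_iff_mem _ _).mpr hx.1)⟩

end Counting

/-- Two distinct points of `W` span exactly one line of `W`. -/
theorem sum_card_offDiag_filter_le [Finite V] {W : Submodule F V} (A : Finset (Submodule F V))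
    (hA : A ⊆ subspacesBetween 1 ⊥ W) :
    ∑ L ∈ subspacesBetween 2 ⊥ W, #(A.filter (· ≤ L)).offDiag = #A.offDiag := by
  have hpt : ∀ p ∈ A, finrank F p = 1 ∧ p ≤ W := fun p hp => by
    have := mem_subspacesBetween.mp (hA hp); exact ⟨this.1, this.2.2⟩
  have hqp : ∀ p ∈ A, ∀ q ∈ A, p ≠ q → ¬q ≤ p := fun p hp q hq hne =>
    not_le_of_finrank_eq_one (hpt q hq).1 (hpt p hp).1 (Ne.symm hne)
  have hline : ∀ p ∈ A, ∀ q ∈ A, p ≠ q → finrank F ↥(p ⊔ q) = 2 := fun p hp q hq hne => by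
    rw [finrank_sup_of_finrank_eq_one (hpt q hq).1 (hqp p hp q hq hne), (hpt p hp).1]
  rw [card_eq_sum_card_fiberwise (f := fun pq => pq.1 ⊔ pq.2)
    (t := subspacesBetween 2 ⊥ W) (s := A.offDiag)]
  · refine sum_congr rfl fun L hL => congrArg card ?_
    obtain ⟨hL, -, -⟩ := mem_subspacesBetween.mp hL
    ext ⟨p, q⟩
    simp only [mem_filter, mem_offDiag]
    constructor
    · rintro ⟨⟨hp, hpL⟩, ⟨hq, hqL⟩, hne⟩
      exact ⟨⟨hp, hq, hne⟩, sup_eq_of_finrank_eq_succ (hpt q hq).1 (hqp p hp q hq hne)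
        (by rw [hL, (hpt p hp).1]) hpL hqL⟩
    · rintro ⟨⟨hp, hq, hne⟩, rfl⟩
      exact ⟨⟨hp, le_sup_left⟩, ⟨hq, le_sup_right⟩, hne⟩
  · rintro ⟨p, q⟩ hpq
    obtain ⟨hp, hq, hne⟩ := mem_offDiag.mp hpq
    exact mem_subspacesBetween.mpr ⟨hline p hp q hq hne, bot_le, sup_le (hpt p hp).2 (hpt q hq).2⟩

end Subspaces

section Multiplicity

variable {F : Type*} [Field F] [Fintype F] {v : ℕ} (K : PSub F v 1 → ℕ)

theorem pmult_eq_sum (S : Submodule F (Fin v → F)) :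
    pmult K S = ∑ P ∈ univ.filter fun P : PSub F v 1 => P.1 ≤ S, K P :=
  finsum_cond_eq_sum_of_cond_iff _ fun _ => by simp

theorem pmult_point (P : PSub F v 1) : pmult K P.1 = K P := by
  rw [pmult_eq_sum, sum_eq_single_of_mem P (by simp)]
  simp only [mem_filter, mem_univ, true_and]
  exact fun Q hQ hne => absurd (Subtype.ext (Submodule.eq_of_le_of_finrank_le hQ
    (by rw [Q.2, P.2]))) hne

theorem pcard_eq_pmult_top : pcard K = pmult K ⊤ := by
  rw [pmult_eq_sum, pcard, finsum_eq_sum_of_fintype]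
  simp

theorem pmult_mono {S T : Submodule F (Fin v → F)} (h : S ≤ T) : pmult K S ≤ pmult K T := by
  rw [pmult_eq_sum, pmult_eq_sum]
  exact sum_le_sum_of_subset fun P => by simpa using fun hP => hP.trans h

theorem pmult_eq_sum_points (S : Submodule F (Fin v → F)) :
    pmult K S = ∑ p ∈ subspacesBetween 1 ⊥ S, pmult K p := by
  rw [pmult_eq_sum]
  refine sum_bij (fun P _ => P.1) (fun P hP => ?_) (fun P _ Q _ h => Subtype.ext h)
    (fun p hp => ?_) fun P _ => (pmult_point K P).symm
  · simp only [mem_filter, mem_univ, true_and] at hP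
    exact mem_subspacesBetween.mpr ⟨P.2, bot_le, hP⟩
  · obtain ⟨hp, -, hpS⟩ := mem_subspacesBetween.mp hp
    exact ⟨⟨p, hp⟩, by simpa using hpS, rfl⟩

theorem sum_pmult_eq_sum_card_mul {T : Submodule F (Fin v → F)}
    (C : Finset (Submodule F (Fin v → F))) (hC : ∀ U ∈ C, U ≤ T) :
    ∑ U ∈ C, pmult K U = ∑ p ∈ subspacesBetween 1 ⊥ T, #(C.filter (p ≤ ·)) * pmult K p := by
  rw [sum_congr rfl fun U hU => by
    rw [pmult_eq_sum_points, ← filter_le_subspacesBetween (hC U hU), sum_filter], sum_comm]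
  refine sum_congr rfl fun p _ => ?_
  rw [← sum_filter, sum_const, smul_eq_mul]

/-- Each point of `S` lies on every `U` in the sum, each other point of `T` on exactly one,
namely `S ⊔ p`. -/
theorem sum_pmult_subspacesBetween {S T : Submodule F (Fin v → F)} (hST : S ≤ T) :
    ∑ U ∈ subspacesBetween (finrank F S + 1) S T, pmult K U + pmult K S =
      pmult K T + #(subspacesBetween (finrank F S + 1) S T) * pmult K S := by
  set C := subspacesBetween (finrank F S + 1) S T
  have hin : ∀ p ∈ (subspacesBetween 1 ⊥ T).filter (· ≤ S),
      #(C.filter (p ≤ ·)) * pmult K p = #C * pmult K p := by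
    intro p hp
    rw [filter_true_of_mem fun U hU => (mem_filter.mp hp).2.trans (mem_subspacesBetween.mp hU).2.1]
  have hout : ∀ p ∈ (subspacesBetween 1 ⊥ T).filter (¬· ≤ S),
      #(C.filter (p ≤ ·)) * pmult K p = pmult K p := by
    intro p hp
    obtain ⟨hp, hpS⟩ := mem_filter.mp hp
    obtain ⟨hp, -, hpT⟩ := mem_subspacesBetween.mp hp
    suffices C.filter (p ≤ ·) = {S ⊔ p} by rw [this, card_singleton, one_mul]
    ext U
    simp only [C, mem_filter, mem_subspacesBetween, mem_singleton]
    constructor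
    · rintro ⟨⟨hU, hSU, -⟩, hpU⟩
      exact (sup_eq_of_finrank_eq_succ hp hpS hU hSU hpU).symm
    · rintro rfl
      exact ⟨⟨finrank_sup_of_finrank_eq_one hp hpS, le_sup_left, sup_le hST hpT⟩, le_sup_right⟩
  have hsplit : pmult K S + ∑ p ∈ (subspacesBetween 1 ⊥ T).filter (¬· ≤ S), pmult K p =
      pmult K T := by
    rw [pmult_eq_sum_points K S, ← filter_le_subspacesBetween hST,
      sum_filter_add_sum_filter_not, ← pmult_eq_sum_points]
  rw [sum_pmult_eq_sum_card_mul K C fun U hU => (mem_subspacesBetween.mp hU).2.2,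
    ← sum_filter_add_sum_filter_not _ (· ≤ S), sum_congr rfl hin, sum_congr rfl hout, ← mul_sum,
    filter_le_subspacesBetween hST, ← pmult_eq_sum_points]
  linarith

noncomputable def arcPoints (S : Submodule F (Fin v → F)) : Finset (Submodule F (Fin v → F)) :=
  (subspacesBetween 1 ⊥ S).filter (pmult K · ≠ 0)

noncomputable def missingLines (S : Submodule F (Fin v → F)) : Finset (Submodule F (Fin v → F)) :=
  (subspacesBetween 2 ⊥ S).filter (pmult K · = 0)

variable {K}

theorem mem_missingLines {S L : Submodule F (Fin v → F)} :
    L ∈ missingLines K S ↔ L ∈ subspacesBetween 2 ⊥ S ∧ pmult K L = 0 :=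
  mem_filter

theorem missingLines_subset (S : Submodule F (Fin v → F)) :
    missingLines K S ⊆ subspacesBetween 2 ⊥ S :=
  filter_subset _ _

theorem pmult_le_one (hK : ∀ P, K P ≤ 1) {p : Submodule F (Fin v → F)}
    (hp : finrank F p = 1) : pmult K p ≤ 1 :=
  pmult_point K ⟨p, hp⟩ ▸ hK _

theorem pmult_eq_card_arcPoints (hK : ∀ P, K P ≤ 1) (S : Submodule F (Fin v → F)) :
    pmult K S = #(arcPoints K S) := by
  rw [arcPoints, card_filter, pmult_eq_sum_points]
  refine sum_congr rfl fun p hp => ?_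
  have := pmult_le_one hK (mem_subspacesBetween.mp hp).1
  split_ifs <;> omega

theorem arcPoints_of_le {S T : Submodule F (Fin v → F)} (h : S ≤ T) :
    arcPoints K S = (arcPoints K T).filter (· ≤ S) := by
  rw [arcPoints, arcPoints, filter_comm, filter_le_subspacesBetween h]

end Multiplicity

section Plane

variable {v : ℕ}

theorem card_subspacesBetween_zmod_five {S T : Submodule (ZMod 5) (Fin v → ZMod 5)}
    (hST : S ≤ T) {k n : ℕ} (hS : finrank (ZMod 5) S = k) (hT : finrank (ZMod 5) T = n) :
    #(subspacesBetween (k + 1) S T) * (5 ^ (k + 1) - 5 ^ k) = 5 ^ n - 5 ^ k := by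
  have := card_subspacesBetween_mul hST
  rwa [ZMod.card, hS, hT] at this

theorem card_points_of_finrank_eq_two {L : Submodule (ZMod 5) (Fin v → ZMod 5)}
    (hL : finrank (ZMod 5) L = 2) : #(subspacesBetween 1 ⊥ L) = 6 := by
  have := card_subspacesBetween_zmod_five bot_le (finrank_bot _ _) hL
  norm_num at this
  omega

variable {W : Submodule (ZMod 5) (Fin v → ZMod 5)} (hW : finrank (ZMod 5) W = 3)
include hW

theorem card_points_of_finrank_eq_three : #(subspacesBetween 1 ⊥ W) = 31 := by
  have := card_subspacesBetween_zmod_five bot_le (finrank_bot _ _) hW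
  norm_num at this
  omega

theorem card_lines_through_of_finrank_eq_three {p : Submodule (ZMod 5) (Fin v → ZMod 5)}
    (hp : finrank (ZMod 5) p = 1) (hpW : p ≤ W) : #(subspacesBetween 2 p W) = 6 := by
  have := card_subspacesBetween_zmod_five hpW hp hW
  norm_num at this
  omega

theorem card_lines_of_finrank_eq_three : #(subspacesBetween 2 ⊥ W) = 31 := by
  have := card_mul_eq_card_mul (fun L p => p ≤ L) (s := subspacesBetween 2 ⊥ W)
    (t := subspacesBetween 1 ⊥ W) (m := 6) (n := 6) (fun L hL => ?_) fun p hp => ?_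
  · rw [card_points_of_finrank_eq_three hW] at this
    omega
  · obtain ⟨hL, -, hLW⟩ := mem_subspacesBetween.mp hL
    rw [bipartiteAbove, filter_le_subspacesBetween hLW, card_points_of_finrank_eq_two hL]
  · obtain ⟨hp, -, hpW⟩ := mem_subspacesBetween.mp hp
    rw [bipartiteBelow, filter_ge_subspacesBetween bot_le,
      card_lines_through_of_finrank_eq_three hW hp hpW]

variable (K : PSub (ZMod 5) v 1 → ℕ)

theorem sum_pmult_lines_through {p : Submodule (ZMod 5) (Fin v → ZMod 5)}
    (hp : finrank (ZMod 5) p = 1) (hpW : p ≤ W) :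
    ∑ L ∈ subspacesBetween 2 p W, pmult K L = pmult K W + 5 * pmult K p := by
  have := sum_pmult_subspacesBetween K hpW
  simp only [hp, Nat.reduceAdd, card_lines_through_of_finrank_eq_three hW hp hpW] at this
  omega

theorem sum_pmult_lines : ∑ L ∈ subspacesBetween 2 ⊥ W, pmult K L = 6 * pmult K W := by
  rw [sum_pmult_eq_sum_card_mul K _ fun L hL => (mem_subspacesBetween.mp hL).2.2,
    pmult_eq_sum_points K W, mul_sum]
  refine sum_congr rfl fun p hp => ?_
  obtain ⟨hp, -, hpW⟩ := mem_subspacesBetween.mp hp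
  rw [filter_ge_subspacesBetween bot_le, card_lines_through_of_finrank_eq_three hW hp hpW]


/-- Two lines missing `K` meet in a point off `K`, and the other four lines through it carry the
whole multiplicity of `W`. -/
theorem card_missingLines_le_one {t : ℕ} (ht : ∀ L ∈ subspacesBetween 2 ⊥ W, pmult K L ≤ t)
    (hm : 4 * t < pmult K W) : #(missingLines K W) ≤ 1 := by
  refine card_le_one.mpr fun L₁ h₁ L₂ h₂ => by_contra fun hne => ?_
  obtain ⟨h₁, h₁0⟩ := mem_missingLines.mp h₁
  obtain ⟨h₂, h₂0⟩ := mem_missingLines.mp h₂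
  obtain ⟨hL₁, -, hL₁W⟩ := mem_subspacesBetween.mp h₁
  obtain ⟨hL₂, -, hL₂W⟩ := mem_subspacesBetween.mp h₂
  have hx := finrank_inf_eq_one_of_finrank_eq_two hW hL₁ hL₂ hL₁W hL₂W hne
  have hxW : L₁ ⊓ L₂ ≤ W := inf_le_left.trans hL₁W
  have hx0 : pmult K (L₁ ⊓ L₂) = 0 := by
    have := pmult_mono K (inf_le_left : L₁ ⊓ L₂ ≤ L₁); omega
  have hpair : {L₁, L₂} ⊆ subspacesBetween 2 (L₁ ⊓ L₂) W := by
    intro L hL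
    rcases mem_insert.mp hL with rfl | hL
    · exact mem_subspacesBetween.mpr ⟨hL₁, inf_le_left, hL₁W⟩
    · obtain rfl := mem_singleton.mp hL
      exact mem_subspacesBetween.mpr ⟨hL₂, inf_le_right, hL₂W⟩
  have hbound := sum_le_sum_add_card_sdiff_mul hpair (f := pmult K)
    fun L hL => ht L (subspacesBetween_subset_subspacesBetween bot_le le_rfl hL)
  rw [sum_pmult_lines_through hW K hx hxW, sum_pair hne, card_pair hne,
    card_lines_through_of_finrank_eq_three hW hx hxW, hx0, h₁0, h₂0] at hbound
  omega

end Plane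

section PlaneSet

variable {v : ℕ} {W : Submodule (ZMod 5) (Fin v → ZMod 5)} (hW : finrank (ZMod 5) W = 3)
  {K : PSub (ZMod 5) v 1 → ℕ} (hK : ∀ P, K P ≤ 1)
include hW hK

theorem sum_sq_pmult_lines :
    ∑ L ∈ subspacesBetween 2 ⊥ W, pmult K L ^ 2 = pmult K W ^ 2 + 5 * pmult K W := by
  have hpairs := sum_card_offDiag_filter_le (arcPoints K W) (filter_subset _ _)
  rw [offDiag_card, ← pmult_eq_card_arcPoints hK] at hpairs
  rw [sum_congr rfl fun L hL => by
    rw [offDiag_card, ← arcPoints_of_le (mem_subspacesBetween.mp hL).2.2,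
      ← pmult_eq_card_arcPoints hK]] at hpairs
  have hlin := sum_pmult_lines hW K
  have hsq : ∀ n : ℕ, n ^ 2 = (n * n - n) + n := fun n => by
    have := Nat.le_mul_self n; rw [sq]; omega
  rw [sum_congr rfl fun L _ => hsq (pmult K L), sum_add_distrib, hpairs, hlin, hsq]
  omega

theorem sum_pmult_lines_sub_mul_sub (a b : ℤ) :
    ∑ L ∈ subspacesBetween 2 ⊥ W, ((pmult K L : ℤ) - a) * ((pmult K L : ℤ) - b) =
      (pmult K W : ℤ) ^ 2 + 5 * pmult K W - 6 * (a + b) * pmult K W + 31 * a * b := by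
  have hsq : ∑ L ∈ subspacesBetween 2 ⊥ W, (pmult K L : ℤ) ^ 2 =
      (pmult K W : ℤ) ^ 2 + 5 * pmult K W := by exact_mod_cast sum_sq_pmult_lines hW hK
  have hlin : ∑ L ∈ subspacesBetween 2 ⊥ W, (pmult K L : ℤ) = 6 * pmult K W := by
    exact_mod_cast sum_pmult_lines hW K
  have hcard : ∑ _L ∈ subspacesBetween 2 ⊥ W, a * b = 31 * a * b := by
    rw [sum_const, card_lines_of_finrank_eq_three hW, nsmul_eq_mul]; push_cast; ring
  calc ∑ L ∈ subspacesBetween 2 ⊥ W, ((pmult K L : ℤ) - a) * ((pmult K L : ℤ) - b)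
      = ∑ L ∈ subspacesBetween 2 ⊥ W, (pmult K L : ℤ) ^ 2
          - (a + b) * ∑ L ∈ subspacesBetween 2 ⊥ W, (pmult K L : ℤ)
          + ∑ _L ∈ subspacesBetween 2 ⊥ W, a * b := by
        rw [mul_sum, ← sum_sub_distrib, ← sum_add_distrib]
        exact sum_congr rfl fun _ _ => by ring
    _ = _ := by rw [hsq, hlin, hcard]; ring

theorem card_filter_pmult_eq_zero_add_pmult :
    #((subspacesBetween 1 ⊥ W).filter (pmult K · = 0)) + pmult K W = 31 := by
  rw [pmult_eq_card_arcPoints hK, arcPoints, card_filter_add_card_filter_not,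
    card_points_of_finrank_eq_three hW]

theorem pmult_add_five_le {t : ℕ} (ht : ∀ L ∈ subspacesBetween 2 ⊥ W, pmult K L ≤ t)
    {L : Submodule (ZMod 5) (Fin v → ZMod 5)} (hL : L ∈ subspacesBetween 2 ⊥ W)
    (hL0 : pmult K L ≠ 0) : pmult K W + 5 ≤ pmult K L + 5 * t := by
  obtain ⟨hL2, -, hLW⟩ := mem_subspacesBetween.mp hL
  obtain ⟨p, hp, hp0⟩ := exists_ne_zero_of_sum_ne_zero (pmult_eq_sum_points K L ▸ hL0)
  obtain ⟨hp1, -, hpL⟩ := mem_subspacesBetween.mp hp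
  have hpK : pmult K p = 1 := by have := pmult_le_one hK hp1; omega
  have hbound := sum_le_sum_add_card_sdiff_mul
    (singleton_subset_iff.mpr (mem_subspacesBetween.mpr ⟨hL2, hpL, hLW⟩)) (f := pmult K)
    fun L' hL' => ht L' (subspacesBetween_subset_subspacesBetween bot_le le_rfl hL')
  rw [sum_pmult_lines_through hW K hp1 (hpL.trans hLW), sum_singleton, card_singleton,
    card_lines_through_of_finrank_eq_three hW hp1 (hpL.trans hLW), hpK] at hbound
  omega

theorem add_five_le_six_mul {t : ℕ} (ht : ∀ L ∈ subspacesBetween 2 ⊥ W, pmult K L ≤ t)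
    (hm : pmult K W ≠ 0) : pmult K W + 5 ≤ 6 * t := by
  have hlin := sum_pmult_lines hW K
  obtain ⟨L, hL, hL0⟩ := exists_ne_zero_of_sum_ne_zero (hlin ▸ mul_ne_zero (by norm_num) hm)
  have := pmult_add_five_le hW hK ht hL hL0
  have := ht L hL
  omega

/-- Every line meeting the arc has multiplicity exactly `t`, so the pencil of lines through a
point off the arc shows `t ∣ K(W)`. -/
theorem dvd_of_add_five_eq_six_mul {t : ℕ} (ht : ∀ L ∈ subspacesBetween 2 ⊥ W, pmult K L ≤ t)
    (hm : pmult K W + 5 = 6 * t) (hm31 : pmult K W < 31) : t ∣ pmult K W := by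
  have hcard := card_filter_pmult_eq_zero_add_pmult hW hK
  obtain ⟨x, hx⟩ := card_pos.mp (by omega : 0 < #((subspacesBetween 1 ⊥ W).filter (pmult K · = 0)))
  obtain ⟨hx, hx0⟩ := mem_filter.mp hx
  obtain ⟨hx1, -, hxW⟩ := mem_subspacesBetween.mp hx
  rw [← add_zero (pmult K W), ← mul_zero 5, ← hx0, ← sum_pmult_lines_through hW K hx1 hxW]
  refine dvd_sum fun L hL => ?_
  have hL' := subspacesBetween_subset_subspacesBetween bot_le le_rfl hL
  by_cases hL0 : pmult K L = 0
  · rw [hL0]; exact dvd_zero t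
  have := pmult_add_five_le hW hK ht hL' hL0
  have := ht L hL'
  rw [show pmult K L = t by omega]

theorem pmult_ne_eighteen (ht : ∀ L ∈ subspacesBetween 2 ⊥ W, pmult K L ≤ 4) :
    pmult K W ≠ 18 := by
  intro hm
  have hterm : ∀ L ∈ subspacesBetween 2 ⊥ W,
      (12 : ℤ) ∣ ((pmult K L : ℤ) - 3) * ((pmult K L : ℤ) - 4) := by
    intro L hL
    by_cases hL0 : pmult K L = 0
    · rw [hL0]; norm_num
    have := pmult_add_five_le hW hK ht hL hL0
    have := ht L hL
    rcases (by omega : pmult K L = 3 ∨ pmult K L = 4) with h | h <;> rw [h] <;> norm_num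
  have := dvd_sum hterm
  rw [sum_pmult_lines_sub_mul_sub hW hK, hm] at this
  norm_num at this

/-- Five lines of the plane cover at least `5 * 6 - 10 = 20` points, but only `31 - 12 = 19` points
are off the arc. -/
theorem pmult_ne_twelve (ht : ∀ L ∈ subspacesBetween 2 ⊥ W, pmult K L ≤ 3) :
    pmult K W ≠ 12 := by
  intro hm
  have hterm : ∀ L ∈ subspacesBetween 2 ⊥ W, ((pmult K L : ℤ) - 2) * ((pmult K L : ℤ) - 3) =
      if L ∈ missingLines K W then 6 else 0 := by
    intro L hL
    by_cases hL0 : pmult K L = 0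
    · rw [if_pos (mem_missingLines.mpr ⟨hL, hL0⟩), hL0]; norm_num
    have := pmult_add_five_le hW hK ht hL hL0
    have := ht L hL
    rw [if_neg fun h => hL0 (mem_missingLines.mp h).2]
    rcases (by omega : pmult K L = 2 ∨ pmult K L = 3) with h | h <;> rw [h] <;> norm_num
  have hcount : #(missingLines K W) = 5 := by
    have := sum_pmult_lines_sub_mul_sub hW hK 2 3
    rw [sum_congr rfl hterm, sum_ite_mem, inter_eq_right.mpr (missingLines_subset W), sum_const,
      hm] at this
    norm_num at this
    omega
  have hcover := sum_card_le_card_biUnion_add_choose_two (missingLines K W)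
    (subspacesBetween 1 ⊥ ·) fun L₁ h₁ L₂ h₂ hne => card_points_inter_le_one
      (mem_subspacesBetween.mp (mem_missingLines.mp h₁).1).1
      (mem_subspacesBetween.mp (mem_missingLines.mp h₂).1).1 hne
  have hsub : (missingLines K W).biUnion (subspacesBetween 1 ⊥ ·) ⊆
      (subspacesBetween 1 ⊥ W).filter (pmult K · = 0) := by
    intro x hx
    obtain ⟨L, hL, hx⟩ := mem_biUnion.mp hx
    obtain ⟨hL, hL0⟩ := mem_missingLines.mp hL
    obtain ⟨hx1, -, hxL⟩ := mem_subspacesBetween.mp hx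
    have := pmult_mono K hxL
    exact mem_filter.mpr ⟨mem_subspacesBetween.mpr
      ⟨hx1, bot_le, hxL.trans (mem_subspacesBetween.mp hL).2.2⟩, by omega⟩
  rw [sum_congr rfl fun L hL => card_points_of_finrank_eq_two
    (mem_subspacesBetween.mp (mem_missingLines.mp hL).1).1, sum_const, hcount] at hcover
  have := card_le_card hsub
  have := card_filter_pmult_eq_zero_add_pmult hW hK
  simp only [smul_eq_mul, Nat.reduceMul, Nat.choose_two_right] at hcover
  omega

theorem pmult_ne_seventeen (ht : ∀ L ∈ subspacesBetween 2 ⊥ W, pmult K L ≤ 4) :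
    pmult K W ≠ 17 := by
  intro hm
  have hterm : ∀ L ∈ subspacesBetween 2 ⊥ W, ((pmult K L : ℤ) - 2) * ((pmult K L : ℤ) - 4) ≤
      if L ∈ missingLines K W then 8 else 0 := by
    intro L hL
    by_cases hL0 : pmult K L = 0
    · rw [if_pos (mem_missingLines.mpr ⟨hL, hL0⟩), hL0]; norm_num
    have := pmult_add_five_le hW hK ht hL hL0
    have := ht L hL
    rw [if_neg fun h => hL0 (mem_missingLines.mp h).2]
    rcases (by omega : pmult K L = 2 ∨ pmult K L = 3 ∨ pmult K L = 4) with h | h | h <;>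
      rw [h] <;> norm_num
  have := sum_le_sum hterm
  rw [sum_pmult_lines_sub_mul_sub hW hK, sum_ite_mem, inter_eq_right.mpr (missingLines_subset W),
    sum_const, hm] at this
  have := card_missingLines_le_one hW K ht (by omega)
  norm_num at *
  omega

end PlaneSet

section Space

variable {L p : Submodule (ZMod 5) (Fin 4 → ZMod 5)}

theorem finrank_top_eq_four : finrank (ZMod 5) (⊤ : Submodule (ZMod 5) (Fin 4 → ZMod 5)) = 4 := by
  rw [finrank_top, finrank_fin_fun]

theorem card_planes_through_line (hL : finrank (ZMod 5) L = 2) :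
    #(subspacesBetween 3 L ⊤) = 6 := by
  have := card_subspacesBetween_zmod_five le_top hL finrank_top_eq_four
  norm_num at this
  omega

theorem card_lines_through_point (hp : finrank (ZMod 5) p = 1) :
    #(subspacesBetween 2 p ⊤) = 31 := by
  have := card_subspacesBetween_zmod_five le_top hp finrank_top_eq_four
  norm_num at this
  omega

variable (K : PSub (ZMod 5) 4 1 → ℕ)

theorem sum_pmult_planes_through_line (hL : finrank (ZMod 5) L = 2) :
    ∑ H ∈ subspacesBetween 3 L ⊤, pmult K H = pcard K + 5 * pmult K L := by
  have := sum_pmult_subspacesBetween K (le_top (a := L))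
  simp only [hL, Nat.reduceAdd, card_planes_through_line hL, ← pcard_eq_pmult_top] at this
  omega

theorem sum_pmult_lines_through_point (hp : finrank (ZMod 5) p = 1) :
    ∑ L ∈ subspacesBetween 2 p ⊤, pmult K L = pcard K + 30 * pmult K p := by
  have := sum_pmult_subspacesBetween K (le_top (a := p))
  simp only [hp, Nat.reduceAdd, card_lines_through_point hp, ← pcard_eq_pmult_top] at this
  omega

variable {K} (hcard : pcard K = 104) (hle : ∀ H : PSub (ZMod 5) 4 3, pmult K H.1 ≤ 22)
include hcard hle

theorem five_mul_pmult_line_le {H : Submodule (ZMod 5) (Fin 4 → ZMod 5)}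
    (hH : finrank (ZMod 5) H = 3) (hL : finrank (ZMod 5) L = 2) (hLH : L ≤ H) :
    5 * pmult K L ≤ 6 + pmult K H := by
  have hbound := sum_le_sum_add_card_sdiff_mul
    (singleton_subset_iff.mpr (mem_subspacesBetween.mpr ⟨hH, hLH, le_top⟩)) (f := pmult K)
    fun H' hH' => hle ⟨H', (mem_subspacesBetween.mp hH').1⟩
  rw [sum_pmult_planes_through_line K hL, sum_singleton, card_singleton,
    card_planes_through_line hL, hcard] at hbound
  omega

theorem pmult_line_le_five (hL : finrank (ZMod 5) L = 2) : pmult K L ≤ 5 := by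
  have hbound := sum_le_card_nsmul (subspacesBetween 3 L ⊤) (pmult K) 22
    fun H hH => hle ⟨H, (mem_subspacesBetween.mp hH).1⟩
  rw [sum_pmult_planes_through_line K hL, card_planes_through_line hL, hcard, smul_eq_mul] at hbound
  omega

theorem pmult_point_le_one (P : PSub (ZMod 5) 4 1) : K P ≤ 1 := by
  have hbound := sum_le_card_nsmul (subspacesBetween 2 P.1 ⊤) (pmult K) 5
    fun L hL => pmult_line_le_five hcard hle (mem_subspacesBetween.mp hL).1
  rw [sum_pmult_lines_through_point K P.2, card_lines_through_point P.2, hcard, pmult_point,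
    smul_eq_mul] at hbound
  omega

theorem exists_point_eq_one : ∃ P : PSub (ZMod 5) 4 1, K P = 1 := by
  obtain ⟨P, -, hP⟩ := exists_ne_zero_of_sum_ne_zero
    (by rw [← finsum_eq_sum_of_fintype, ← pcard, hcard]; norm_num : ∑ P, K P ≠ 0)
  exact ⟨P, by have := pmult_point_le_one hcard hle P; omega⟩

theorem exists_line_eq_five (hex : ∃ H : PSub (ZMod 5) 4 3, pmult K H.1 = 22) :
    ∃ L : PSub (ZMod 5) 4 2, pmult K L.1 = 5 := by
  obtain ⟨H, hH⟩ := hex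
  by_contra! hne
  have hbound := sum_le_card_nsmul (subspacesBetween 2 ⊥ H.1) (pmult K) 4 fun L hL => by
    have hL2 := (mem_subspacesBetween.mp hL).1
    have := pmult_line_le_five hcard hle hL2
    have : pmult K L ≠ 5 := hne ⟨L, hL2⟩
    omega
  rw [sum_pmult_lines H.2 K, card_lines_of_finrank_eq_three H.2, hH, smul_eq_mul] at hbound
  omega

theorem pmult_plane_notMem (H : PSub (ZMod 5) 4 3) :
    pmult K H.1 ∉ ({2, 3, 7, 8, 12, 13, 17, 18} : Set ℕ) := by
  have hK := pmult_point_le_one hcard hle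
  have ht : ∀ L ∈ subspacesBetween 2 ⊥ H.1, pmult K L ≤ (6 + pmult K H.1) / 5 := fun L hL => by
    obtain ⟨hL, -, hLH⟩ := mem_subspacesBetween.mp hL
    have := five_mul_pmult_line_le hcard hle H.2 hL hLH
    omega
  simp only [Set.mem_insert_iff, Set.mem_singleton_iff]
  rintro (h | h | h | h | h | h | h | h) <;> rw [h] at ht
  · have := add_five_le_six_mul H.2 hK ht (by omega); omega
  · have := add_five_le_six_mul H.2 hK ht (by omega); omega
  · have := dvd_of_add_five_eq_six_mul H.2 hK ht (by omega) (by omega)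
    rw [h] at this; norm_num at this
  · have := add_five_le_six_mul H.2 hK ht (by omega); omega
  · exact pmult_ne_twelve H.2 hK ht h
  · have := dvd_of_add_five_eq_six_mul H.2 hK ht (by omega) (by omega)
    rw [h] at this; norm_num at this
  · exact pmult_ne_seventeen H.2 hK ht h
  · exact pmult_ne_eighteen H.2 hK ht h

end Space

end PG

/-- Basic structure of a `(104,22)`-arc `K` in `PG(3,5)`:
(a) the maximal multiplicity of a line in an `m`-plane is `⌊(6+m)/5⌋`;
(b) `γ₁ = 1`, `γ₂ = 5`, `γ₃ = 22`;
(c) there are no planes of multiplicity `2, 3, 7, 8, 12, 13, 17, 18`. -/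
theorem stmt16 (K : PSub (ZMod 5) 4 1 → ℕ)
    (hcard : pcard K = 104)
    (hle : ∀ H : PSub (ZMod 5) 4 3, pmult K H.1 ≤ 22)
    (hex : ∃ H0 : PSub (ZMod 5) 4 3, pmult K H0.1 = 22) :
    (∀ H : PSub (ZMod 5) 4 3, ∀ L : PSub (ZMod 5) 4 2, L.1 ≤ H.1 →
      5 * pmult K L.1 ≤ 6 + pmult K H.1) ∧
    ((∀ P : PSub (ZMod 5) 4 1, K P ≤ 1) ∧
      (∀ L : PSub (ZMod 5) 4 2, pmult K L.1 ≤ 5) ∧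
      (∃ P : PSub (ZMod 5) 4 1, K P = 1) ∧
      (∃ L : PSub (ZMod 5) 4 2, pmult K L.1 = 5)) ∧
    (∀ H : PSub (ZMod 5) 4 3,
      pmult K H.1 ∉ ({2, 3, 7, 8, 12, 13, 17, 18} : Set ℕ)) := by
  exact ⟨fun H L hLH => PG.five_mul_pmult_line_le hcard hle H.2 L.2 hLH,
    ⟨PG.pmult_point_le_one hcard hle, fun L => PG.pmult_line_le_five hcard hle L.2,
      PG.exists_point_eq_one hcard hle, PG.exists_line_eq_five hcard hle hex⟩,
    PG.pmult_plane_notMem hcard hle⟩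
end
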